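/- arXiv:2301.10620 — 2 statements merged into one kernel-verified Lean document; each statement's English description precedes it below -/
import Mathlib

section
/- Let Σ be a planar model satisfying Assumption (*) with 1 ≤ α < 2, where α = dim(Σ). Then there exist p₀ > 0 and κ > 0 such that for ℙ-almost every ω ∈ Ω: liminf_{n→∞} inf_{W ∈ ℝP¹} ξ^(W)({V ∈ ℝP¹ : H_n(π_V η^(ω)) ≥ α − 1 + κ}) ≥ p₀. -/
open MeasureTheory Filter Set
open scoped ENNReal Topology Classical

noncomputable section

namespace SSmodel

/-- The left shift on sequence space. -/
def shiftMap {I : Type} (ω : ℕ → I) : ℕ → I := fun n => ω (n + 1)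

/-- The `j`-th iterate of the left shift. -/
def shiftN {I : Type} (j : ℕ) (ω : ℕ → I) : ℕ → I := fun n => ω (n + j)

/-- A planar model: a finite family of homogeneous self-similar IFSs on ℂ together with
probability vectors and a selection measure on the symbolic space. -/
structure PlanarModel (I : Type) [Fintype I] [MeasurableSpace I] where
  k : I → ℕ
  k_pos : ∀ i, 0 < k i
  lam : I → ℂ
  lam_ne : ∀ i, lam i ≠ 0
  lam_lt : ∀ i, ‖lam i‖ < 1
  tr : (i : I) → Fin (k i) → ℂ
  p : (i : I) → Fin (k i) → ℝ
  p_pos : ∀ i j, 0 < p i j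
  p_sum : ∀ i, ∑ j, p i j = 1
  P : Measure (ℕ → I)
  P_prob : IsProbabilityMeasure P

namespace PlanarModel

variable {I : Type} [Fintype I] [MeasurableSpace I] (M : PlanarModel I)

/-- The coding map Π_ω. -/
def codingMap (ω : ℕ → I) (u : (n : ℕ) → Fin (M.k (ω n))) : ℂ :=
  ∑' n : ℕ, (∏ j ∈ Finset.range n, M.lam (ω j)) * M.tr (ω n) (u n)

/-- Characterization of the infinite product measure ⊗ₙ p_{ωₙ} via cylinders. -/
def IsProductMeasure (ω : ℕ → I) (μ : Measure ((n : ℕ) → Fin (M.k (ω n)))) : Prop :=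
  IsProbabilityMeasure μ ∧
    ∀ (n : ℕ) (u : (j : Fin n) → Fin (M.k (ω j.val))),
      μ {x | ∀ j : Fin n, x j.val = u j} = ∏ j : Fin n, ENNReal.ofReal (M.p (ω j.val) (u j))

/-- `η` is the family of random measures η^(ω) generated by the model:
η^(ω) is the pushforward under Π_ω of the product measure ⊗ₙ p_{ωₙ}. -/
def IsCodingFamily (η : (ℕ → I) → Measure ℂ) : Prop :=
  ∀ ω : ℕ → I, ∃ μ : Measure ((n : ℕ) → Fin (M.k (ω n))),
    M.IsProductMeasure ω μ ∧ η ω = μ.map (M.codingMap ω)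

/-- Assumption (*) : the selection measure is shift-invariant and ergodic, some IFS occurring
with positive probability has two distinct maps, and some rotation occurring with positive
probability is not real. -/
def AssumptionStar : Prop :=
  Ergodic shiftMap M.P ∧
    (∃ i₀ : I, M.P {ω | ω 0 = i₀} ≠ 0 ∧ ∃ j j' : Fin (M.k i₀), M.tr i₀ j ≠ M.tr i₀ j') ∧
    (∃ i₁ : I, M.P {ω | ω 0 = i₁} ≠ 0 ∧ (M.lam i₁).im ≠ 0)

/-- Non-degeneracy of the model. -/
def NonDegenerate : Prop :=
  ∃ i₀ : I, M.P {ω | ω 0 = i₀} ≠ 0 ∧ ∃ j j' : Fin (M.k i₀), M.tr i₀ j ≠ M.tr i₀ j'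

/-- The similarity dimension of the model (entropy over Lyapunov exponent). -/
def sdim : ℝ :=
  (∫ ω, (-∑ j, M.p (ω 0) j * Real.log (M.p (ω 0) j)) ∂M.P) /
    (-∫ ω, Real.log (‖M.lam (ω 0)‖) ∂M.P)

/-- f_u^(ω)(0), for a word u of length n. -/
def finCode (ω : ℕ → I) (n : ℕ) (u : (j : Fin n) → Fin (M.k (ω j.val))) : ℂ :=
  ∑ m : Fin n, (∏ j ∈ Finset.range m.val, M.lam (ω j)) * M.tr (ω m.val) (u m)

/-- The product of the contraction parts along the first n symbols. -/
def lamProd (ω : ℕ → I) (n : ℕ) : ℂ := ∏ j ∈ Finset.range n, M.lam (ω j)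

/-- The minimal distance Δ_n^(ω) between distinct cylinder points. -/
def Delta (ω : ℕ → I) (n : ℕ) : ℝ :=
  if ∃ u v : (j : Fin n) → Fin (M.k (ω j.val)), u ≠ v then
    sInf {d : ℝ | ∃ u v : (j : Fin n) → Fin (M.k (ω j.val)), u ≠ v ∧
      d = ‖M.finCode ω n u - M.finCode ω n v‖}
  else 0

/-- `R` is a good radius for the model: the closed ball B(0,R) is mapped into itself by all the
maps and 2·R·r_min > 1/2. -/
def GoodRadius (R : ℝ) : Prop :=
  0 < R ∧ (∀ (i : I) (j : Fin (M.k i)) (z : ℂ), ‖z‖ ≤ R →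
      ‖M.lam i * z + M.tr i j‖ < R) ∧
    ∀ i : I, (1 : ℝ) / 2 < 2 * R * ‖M.lam i‖

/-- `np ω n` is the integer n'(ω) adapted to scale 2^{-n}: it satisfies
2R·∏_{i<n'} r_{ω_i} ≤ 2^{-n} ≤ 2R·∏_{i<n'-1} r_{ω_i}. -/
def IsNPrime (R : ℝ) (np : (ℕ → I) → ℕ → ℕ) : Prop :=
  ∀ (ω : ℕ → I) (n : ℕ),
    2 * R * (∏ i ∈ Finset.range (np ω n), ‖M.lam (ω i)‖) ≤ (2 : ℝ) ^ (-(n : ℤ)) ∧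
      (2 : ℝ) ^ (-(n : ℤ)) ≤ 2 * R * ∏ i ∈ Finset.range (np ω n - 1), ‖M.lam (ω i)‖

/-- The point of the circle (in the squared identification ℝP¹ ≅ 𝕋) corresponding to the
rotation part φ_i of the i-th IFS: φ_i². -/
def rotPt (i : I) : ℂ := (M.lam i / (‖M.lam i‖ : ℂ)) ^ 2

/-- Generators of the rotation group G_Σ (squared identification), together with inverses. -/
def rotGens : Set ℂ := {z | ∃ i : I, z = M.rotPt i ∨ z = (starRingEnd ℂ) (M.rotPt i)}

/-- The closed orbit G_Σ·v of a point v of the circle. -/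
def orbitClosure (v : ℂ) : Set ℂ :=
  closure ((fun g => g * v) '' ((Submonoid.closure M.rotGens : Submonoid ℂ) : Set ℂ))

/-- Characterization of ξ^(W) (for the line W corresponding to the circle point v in the
squared identification): the unique probability measure on the coset G_Σ·v invariant under
all the rotations of the model. -/
def IsXiW (v : ℂ) (ξ : Measure ℂ) : Prop :=
  IsProbabilityMeasure ξ ∧ (∀ i : I, ξ.map (fun z => M.rotPt i * z) = ξ) ∧
    ξ (M.orbitClosure v) = 1

/-- The discrete measure ν^{(ω,n)} = ∑_u p_u δ_{f_u^(ω)(0)}. -/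
def nuMeasure (ω : ℕ → I) (n : ℕ) : Measure ℂ :=
  ∑ u : (j : Fin n) → Fin (M.k (ω j.val)),
    ENNReal.ofReal (∏ j : Fin n, M.p (ω j.val) (u j)) • Measure.dirac (M.finCode ω n u)

end PlanarModel

/-! ### Entropy, components, projections -/

/-- -x·log₂ x. -/
def plog (x : ℝ) : ℝ := -(x * Real.logb 2 x)

/-- Level-n dyadic cell of ℝ² ≅ ℂ with index a ∈ ℤ². -/
def cell2 (n : ℕ) (a : ℤ × ℤ) : Set ℂ :=
  {z : ℂ | (a.1 : ℝ) ≤ (2 : ℝ) ^ n * z.re ∧ (2 : ℝ) ^ n * z.re < (a.1 : ℝ) + 1 ∧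
    (a.2 : ℝ) ≤ (2 : ℝ) ^ n * z.im ∧ (2 : ℝ) ^ n * z.im < (a.2 : ℝ) + 1}

/-- Entropy (base 2) of a measure on ℂ w.r.t. the level-n dyadic partition. -/
def H2 (μ : Measure ℂ) (n : ℕ) : ℝ := ∑' a : ℤ × ℤ, plog (μ (cell2 n a)).toReal

/-- Normalized entropy H_n(μ) = H(μ,D_n)/n for measures on ℂ. -/
def Hn2 (μ : Measure ℂ) (n : ℕ) : ℝ := H2 μ n / n

/-- Level-n dyadic cell of ℝ with index a ∈ ℤ. -/
def cell1 (n : ℕ) (a : ℤ) : Set ℝ :=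
  {x : ℝ | (a : ℝ) ≤ (2 : ℝ) ^ n * x ∧ (2 : ℝ) ^ n * x < (a : ℝ) + 1}

/-- Entropy (base 2) of a measure on ℝ w.r.t. the level-n dyadic partition. -/
def H1 (μ : Measure ℝ) (n : ℕ) : ℝ := ∑' a : ℤ, plog (μ (cell1 n a)).toReal

/-- Normalized entropy for measures on ℝ. -/
def Hn1 (μ : Measure ℝ) (n : ℕ) : ℝ := H1 μ n / n

/-- Orthogonal projection of the plane onto the line with unit direction w,
composed with the isometry to ℝ: z ↦ ⟨z,w⟩. -/
def projMap (w : ℂ) (z : ℂ) : ℝ := z.re * w.re + z.im * w.im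

/-- Normalized entropy of the projection π_W μ, W the line with unit direction w. -/
def projHn (w : ℂ) (μ : Measure ℂ) (m : ℕ) : ℝ := Hn1 (μ.map (projMap w)) m

/-- Unit vectors of the plane. -/
abbrev UnitVec : Type := {w : ℂ // ‖w‖ = 1}

/-- A fixed choice of direction (unit vector) of the line corresponding to the circle
point v in the squared identification ℝP¹ ≅ 𝕋: a square root of v. -/
def lineDir (v : ℂ) : ℂ := Complex.exp (Complex.log v / 2)

/-- Index of the level-n dyadic cell containing x. -/
def cellIdx (n : ℕ) (x : ℂ) : ℤ × ℤ := (⌊(2 : ℝ) ^ n * x.re⌋, ⌊(2 : ℝ) ^ n * x.im⌋)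

/-- The level-n dyadic cell D_n(x) containing x. -/
def dyadicCellOf (n : ℕ) (x : ℂ) : Set ℂ := cell2 n (cellIdx n x)

/-- The homothety T_D mapping D_n(x) onto the unit square. -/
def rescaleMap (n : ℕ) (x : ℂ) (z : ℂ) : ℂ :=
  (2 : ℂ) ^ n * z - (((cellIdx n x).1 : ℂ) + ((cellIdx n x).2 : ℂ) * Complex.I)

/-- Raw component μ_{x,n}: normalized restriction of μ to D_n(x). -/
def rawComponent (μ : Measure ℂ) (n : ℕ) (x : ℂ) : Measure ℂ :=
  (μ (dyadicCellOf n x))⁻¹ • μ.restrict (dyadicCellOf n x)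

/-- Rescaled component μ^{x,n} = T_{D_n(x)}(μ_{x,n}). -/
def rescaledComponent (μ : Measure ℂ) (n : ℕ) (x : ℂ) : Measure ℂ :=
  (rawComponent μ n x).map (rescaleMap n x)

/-- μ is exact dimensional with dimension α. -/
def ExactDim (μ : Measure ℂ) (α : ℝ) : Prop :=
  ∀ᵐ x ∂μ, Tendsto (fun r : ℝ => Real.log (μ (Metric.closedBall x r)).toReal / Real.log r)
    (𝓝[>] (0 : ℝ)) (𝓝 α)

/-- The saturation dimension satdim(μ, ε, m, k): the maximal dimension of a subspace V ≤ ℝ²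
such that the proportion (w.r.t. μ) of level-k rescaled components that are (V,ε,m)-saturated
is at least 1-ε. (A measure ν is (V,ε,m)-saturated if H_m(ν) ≥ H_m(π_{V⊥}ν) + dim V − ε;
the subspaces of ℝ² ≅ ℂ are 0, the lines span(w), and ℝ² itself, and for V = span(w) the
orthogonal complement is the line with unit direction i·w.) -/
def satdim (μ : Measure ℂ) (ε : ℝ) (m k : ℕ) : ℕ :=
  if (1 - ε : ℝ) ≤ (μ {x | 2 - ε ≤ Hn2 (rescaledComponent μ k x) m}).toReal then 2
  else if ∃ w : ℂ, ‖w‖ = 1 ∧ (1 - ε : ℝ) ≤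
      (μ {x | projHn (Complex.I * w) (rescaledComponent μ k x) m + 1 - ε ≤
        Hn2 (rescaledComponent μ k x) m}).toReal then 1
  else 0

/-- μ is (C,ρ)-Frostman on tubes: μ(B(W+x,r)) ≤ C·r^ρ for every line W+x and r>0. -/
def FrostmanOnTubes (μ : Measure ℂ) (C ρ : ℝ) : Prop :=
  ∀ w : ℂ, ‖w‖ = 1 → ∀ x : ℂ, ∀ r : ℝ, 0 < r →
    μ {z : ℂ | |((z - x) * (starRingEnd ℂ) w).im| < r} ≤ ENNReal.ofReal (C * r ^ ρ)

/-- Total variation distance between finite Borel measures on ℂ. -/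
def dTV (μ ν : Measure ℂ) : ℝ :=
  ⨆ s : {s : Set ℂ // MeasurableSet s}, |(μ s.1).toReal - (ν s.1).toReal|

/-- Conditional entropy H(μ, D_m | D_n) (base 2). -/
def condH (μ : Measure ℂ) (m n : ℕ) : ℝ :=
  ∑' a : ℤ × ℤ, (μ (cell2 n a)).toReal * H2 ((μ (cell2 n a))⁻¹ • μ.restrict (cell2 n a)) m

/-- The Fourier transform of a measure on ℂ ≅ ℝ². -/
def FT (μ : Measure ℂ) (ξ : ℂ) : ℂ :=
  ∫ z, Complex.exp (2 * Real.pi * Complex.I * ((z * (starRingEnd ℂ) ξ).re : ℂ)) ∂μ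

/-- μ ∈ 𝒟₂(σ): power Fourier decay with exponent σ. -/
def MemD2 (μ : Measure ℂ) (σ : ℝ) : Prop :=
  ∃ C : ℝ, ∀ ξ : ℂ, 1 ≤ ‖ξ‖ → ‖FT μ ξ‖ ≤ C * ‖ξ‖ ^ (-σ)

/-- ℙ is a Bernoulli measure on I^ℕ. -/
def IsBernoulli {I : Type} [Fintype I] [MeasurableSpace I] (P : Measure (ℕ → I)) : Prop :=
  IsProbabilityMeasure P ∧ ∃ q : I → ℝ, (∀ i, 0 ≤ q i) ∧ ∑ i, q i = 1 ∧
    ∀ (n : ℕ) (u : Fin n → I),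
      P {ω | ∀ j : Fin n, ω j.val = u j} = ∏ j : Fin n, ENNReal.ofReal (q (u j))

/-- ℙ is a fully supported Bernoulli measure on I^ℕ. -/
def IsFullBernoulli {I : Type} [Fintype I] [MeasurableSpace I] (P : Measure (ℕ → I)) : Prop :=
  IsProbabilityMeasure P ∧ ∃ q : I → ℝ, (∀ i, 0 < q i) ∧ ∑ i, q i = 1 ∧
    ∀ (n : ℕ) (u : Fin n → I),
      P {ω | ∀ j : Fin n, ω j.val = u j} = ∏ j : Fin n, ENNReal.ofReal (q (u j))

end SSmodel

namespace SSmodel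

/-- The (unnormalized) n-truncated k-component: the part of the n-th level decomposition of
η^(ω) consisting of the pieces f_u η^{(Tⁿω)} whose supporting ball B_u^(ω) = f_u(B(0,R)) is
contained in the dyadic cell D_k(x). -/
def truncSum {I : Type} [Fintype I] [MeasurableSpace I] (M : PlanarModel I)
    (η : (ℕ → I) → Measure ℂ) (R : ℝ) (ω : ℕ → I) (n k : ℕ) (x : ℂ) : Measure ℂ :=
  ∑ u : (j : Fin n) → Fin (M.k (ω j.val)),
    if ∀ z : ℂ, ‖z‖ ≤ R → M.lamProd ω n * z + M.finCode ω n u ∈ dyadicCellOf k x then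
      ENNReal.ofReal (∏ j : Fin n, M.p (ω j.val) (u j)) •
        ((η (shiftN n ω)).map (fun z => M.lamProd ω n * z + M.finCode ω n u))
    else 0

/-- The n-truncated k-component η^(ω)_{n,[x,k]} (normalized). -/
def truncComponent {I : Type} [Fintype I] [MeasurableSpace I] (M : PlanarModel I)
    (η : (ℕ → I) → Measure ℂ) (R : ℝ) (ω : ℕ → I) (n k : ℕ) (x : ℂ) : Measure ℂ :=
  (truncSum M η R ω n k x Set.univ)⁻¹ • truncSum M η R ω n k x

end SSmodel

open SSmodel SSmodel.PlanarModel

/-!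
Two transversal projections determine a planar measure up to `O(log (1 / |sin θ|))` bits per
scale, `θ` being the angle between the lines. Exact dimensionality gives `H_n(η) ≥ α - o(1)`, so if
two lines both carried projections of entropy below `α - 1 + κ` with `κ < (2 - α) / 2`, then
`log (1 / |sin θ|)` would grow linearly in `n`: all such bad lines lie in an arc of length
`ρₙ → 0`. Since some rotation `φ_{i₁}` is not real, `ξ^(W)` is invariant under a nontrivial
rotation of `ℝP¹`, which moves a short arc off itself; hence a short arc has `ξ^(W)`-mass at
most `1/2`, and the good lines have mass at least `1/2`.
-/

namespace SSmodel

section Plog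

lemma plog_nonneg {x : ℝ} (h0 : 0 ≤ x) (h1 : x ≤ 1) : 0 ≤ plog x :=
  neg_nonneg.mpr (mul_nonpos_of_nonneg_of_nonpos h0 (Real.logb_nonpos one_lt_two h0 h1))

lemma plog_add_le {x y : ℝ} (hx : 0 ≤ x) (hy : 0 ≤ y) : plog (x + y) ≤ plog x + plog y := by
  rcases hx.eq_or_lt with rfl | hx'
  · simp [plog]
  rcases hy.eq_or_lt with rfl | hy'
  · simp [plog]
  have h₁ := Real.logb_le_logb_of_le one_lt_two hx' (le_add_of_nonneg_right hy)
  have h₂ := Real.logb_le_logb_of_le one_lt_two hy' (le_add_of_nonneg_left hx)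
  simp only [plog]
  nlinarith [mul_le_mul_of_nonneg_left h₁ hx, mul_le_mul_of_nonneg_left h₂ hy]

lemma plog_sum_le {ι : Type*} (s : Finset ι) (f : ι → ℝ) (hf : ∀ i ∈ s, 0 ≤ f i) :
    plog (∑ i ∈ s, f i) ≤ ∑ i ∈ s, plog (f i) := by
  induction s using Finset.cons_induction with
  | empty => simp [plog]
  | cons a s ha ih =>
    rw [Finset.sum_cons, Finset.sum_cons]
    have hs : ∀ i ∈ s, 0 ≤ f i := fun i hi => hf i (Finset.mem_cons_of_mem hi)
    exact (plog_add_le (hf a (Finset.mem_cons_self a s)) (Finset.sum_nonneg hs)).trans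
      (add_le_add_right (ih hs) _)

lemma mul_neg_logb_le_plog {p t : ℝ} (hp : 0 ≤ p) (hpt : p ≤ t) :
    p * -Real.logb 2 t ≤ plog p := by
  rcases hp.eq_or_lt with rfl | hp'
  · simp [plog]
  have := Real.logb_le_logb_of_le one_lt_two hp' hpt
  simp only [plog]
  nlinarith

/-- Gibbs' inequality in pointwise form: `log x ≤ x - 1` at `x = q / p`. -/
lemma plog_le {p q : ℝ} (hp : 0 ≤ p) (hq : 0 ≤ q) (hpq : q = 0 → p = 0) :
    plog p ≤ (q - p) / Real.log 2 - p * Real.logb 2 q := by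
  rcases hp.eq_or_lt with rfl | hp'
  · simpa [plog] using div_nonneg hq (Real.log_nonneg one_le_two)
  have hq' : 0 < q := hq.lt_of_ne fun h => hp'.ne' (hpq h.symm)
  have hlog := Real.log_le_sub_one_of_pos (div_pos hq' hp')
  rw [Real.log_div hq'.ne' hp'.ne'] at hlog
  have hkey : p * (Real.log q - Real.log p) ≤ q - p :=
    calc p * (Real.log q - Real.log p) ≤ p * (q / p - 1) := mul_le_mul_of_nonneg_left hlog hp'.le
      _ = q - p := by field_simp
  calc plog p = -(p * Real.log p) / Real.log 2 := by simp only [plog, Real.logb]; ring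
    _ ≤ (q - p - p * Real.log q) / Real.log 2 := by gcongr; linarith
    _ = (q - p) / Real.log 2 - p * Real.logb 2 q := by rw [Real.logb]; ring

lemma sum_plog_le_of_card_le {ι : Type*} (s : Finset ι) (f : ι → ℝ) (hf : ∀ i ∈ s, 0 ≤ f i)
    {K : ℕ} (hK : (s.filter (f · ≠ 0)).card ≤ K) :
    ∑ i ∈ s, plog (f i) ≤ plog (∑ i ∈ s, f i) + (∑ i ∈ s, f i) * Real.logb 2 K := by
  set t := s.filter (f · ≠ 0)
  have hsum : ∑ i ∈ s, f i = ∑ i ∈ t, f i := (Finset.sum_filter_ne_zero s).symm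
  have hplog : ∑ i ∈ s, plog (f i) = ∑ i ∈ t, plog (f i) := by
    rw [Finset.sum_filter]
    refine Finset.sum_congr rfl fun i _ => ?_
    split_ifs with h
    · rfl
    · simp [not_not.mp h, plog]
  rw [hplog, hsum]
  rcases t.eq_empty_or_nonempty with ht | ht
  · simp [ht, plog]
  have hpos : ∀ i ∈ t, 0 < f i := fun i hi =>
    (hf i (Finset.mem_filter.mp hi).1).lt_of_ne' (Finset.mem_filter.mp hi).2
  set m := ∑ i ∈ t, f i
  have hm : 0 < m := Finset.sum_pos hpos ht
  have hK0 : (0 : ℝ) < K := by exact_mod_cast ht.card_pos.trans_le hK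
  have hpt : ∀ i ∈ t, plog (f i) ≤ (m / K - f i) / Real.log 2 - f i * Real.logb 2 (m / K) :=
    fun i hi => plog_le (hpos i hi).le (by positivity) fun h => absurd h (by positivity)
  calc ∑ i ∈ t, plog (f i)
      ≤ ∑ i ∈ t, ((m / K - f i) / Real.log 2 - f i * Real.logb 2 (m / K)) :=
        Finset.sum_le_sum hpt
    _ = (t.card * (m / K) - m) / Real.log 2 - m * Real.logb 2 (m / K) := by
        rw [Finset.sum_sub_distrib, ← Finset.sum_div, Finset.sum_sub_distrib, ← Finset.sum_mul,
          Finset.sum_const, nsmul_eq_mul]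
    _ ≤ (K * (m / K) - m) / Real.log 2 - m * Real.logb 2 (m / K) := by
        gcongr
    _ = plog m + m * Real.logb 2 K := by
        rw [mul_div_cancel₀ _ hK0.ne', sub_self, zero_div, zero_sub,
          Real.logb_div hm.ne' hK0.ne', plog]
        ring

/-- `H(X, Y) ≤ H(X) + H(Y)`. -/
lemma sum_sum_plog_le {ι κ : Type*} (s : Finset ι) (t : Finset κ) (f : ι → κ → ℝ)
    (hf : ∀ i ∈ s, ∀ j ∈ t, 0 ≤ f i j) (htot : ∑ i ∈ s, ∑ j ∈ t, f i j ≤ 1) :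
    ∑ i ∈ s, ∑ j ∈ t, plog (f i j) ≤
      ∑ i ∈ s, plog (∑ j ∈ t, f i j) + ∑ j ∈ t, plog (∑ i ∈ s, f i j) := by
  set r : ι → ℝ := fun i => ∑ j ∈ t, f i j
  set c : κ → ℝ := fun j => ∑ i ∈ s, f i j
  set m := ∑ i ∈ s, r i
  have hm0 : 0 ≤ m := Finset.sum_nonneg fun i hi => Finset.sum_nonneg (hf i hi)
  have hcm : ∑ j ∈ t, c j = m := Finset.sum_comm
  have hpt : ∀ i ∈ s, ∀ j ∈ t, plog (f i j) ≤
      (r i * c j - f i j) / Real.log 2 - f i j * Real.logb 2 (r i) -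
        f i j * Real.logb 2 (c j) := by
    intro i hi j hj
    have hri : f i j ≤ r i := Finset.single_le_sum (hf i hi) hj
    have hcj : f i j ≤ c j := Finset.single_le_sum (fun i' hi' => hf i' hi' j hj) hi
    rcases (hf i hi j hj).eq_or_lt with h0 | hpos
    · rw [← h0]
      simpa [plog] using div_nonneg (mul_nonneg (h0 ▸ hri) (h0 ▸ hcj))
        (Real.log_nonneg one_le_two)
    have h := plog_le (hf i hi j hj) (mul_nonneg (hpos.trans_le hri).le (hpos.trans_le hcj).le)
      fun h => absurd h (mul_pos (hpos.trans_le hri) (hpos.trans_le hcj)).ne'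
    rwa [Real.logb_mul (hpos.trans_le hri).ne' (hpos.trans_le hcj).ne', mul_add,
      ← sub_sub] at h
  calc ∑ i ∈ s, ∑ j ∈ t, plog (f i j)
      ≤ ∑ i ∈ s, ∑ j ∈ t, ((r i * c j - f i j) / Real.log 2 - f i j * Real.logb 2 (r i) -
          f i j * Real.logb 2 (c j)) :=
        Finset.sum_le_sum fun i hi => Finset.sum_le_sum fun j hj => hpt i hi j hj
    _ = (m * m - m) / Real.log 2 + ∑ i ∈ s, plog (r i) + ∑ j ∈ t, plog (c j) := by
        simp only [Finset.sum_sub_distrib, ← Finset.sum_div, ← Finset.mul_sum, ← Finset.sum_mul,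
          plog]
        rw [Finset.sum_comm (f := fun i j => f i j * Real.logb 2 (c j))]
        simp only [← Finset.sum_mul, Finset.sum_neg_distrib]
        rw [hcm]
        ring
    _ ≤ ∑ i ∈ s, plog (r i) + ∑ j ∈ t, plog (c j) := by
        have : (m * m - m) / Real.log 2 ≤ 0 :=
          div_nonpos_of_nonpos_of_nonneg (by nlinarith) (Real.log_nonneg one_le_two)
        linarith

end Plog

section FiberEntropy

variable {α β γ : Type*} [MeasurableSpace α] [MeasurableSpace β] [MeasurableSpace γ]
  [MeasurableSingletonClass β] [MeasurableSingletonClass γ] [Countable β] [Countable γ]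
  {μ : Measure α}

/-- The entropy of the partition of `α` into the fibres of `f`, provided `s` contains `μ`-almost
all values of `f`. -/
def fiberEntropy (μ : Measure α) (f : α → β) (s : Finset β) : ℝ :=
  ∑ b ∈ s, plog (μ (f ⁻¹' {b})).toReal

lemma measure_eq_sum_inter_fiber {f : α → β} (hf : Measurable f) {s : Finset β}
    (hs : ∀ b ∉ s, μ (f ⁻¹' {b}) = 0) {E : Set α} (hE : MeasurableSet E) :
    μ E = ∑ b ∈ s, μ (E ∩ f ⁻¹' {b}) := by
  have hdisj : Pairwise (Function.onFun Disjoint fun b : β => E ∩ f ⁻¹' {b}) :=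
    fun b b' hne => Set.disjoint_left.mpr fun x hx hx' => hne (hx.2.symm.trans hx'.2)
  calc μ E = μ (⋃ b, E ∩ f ⁻¹' {b}) := by congr 1; ext x; simp
    _ = ∑' b, μ (E ∩ f ⁻¹' {b}) :=
        measure_iUnion hdisj fun b => hE.inter (hf (measurableSet_singleton b))
    _ = ∑ b ∈ s, μ (E ∩ f ⁻¹' {b}) :=
        tsum_eq_sum fun b hb => measure_mono_null Set.inter_subset_right (hs b hb)

lemma toReal_measure_eq_sum_inter_fiber [IsFiniteMeasure μ] {f : α → β} (hf : Measurable f)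
    {s : Finset β} (hs : ∀ b ∉ s, μ (f ⁻¹' {b}) = 0) {E : Set α} (hE : MeasurableSet E) :
    (μ E).toReal = ∑ b ∈ s, (μ (E ∩ f ⁻¹' {b})).toReal := by
  rw [measure_eq_sum_inter_fiber hf hs hE, ENNReal.toReal_sum fun b _ => measure_ne_top μ _]

variable [IsProbabilityMeasure μ] {f : α → β} {g : α → γ} {s : Finset β} {t : Finset γ}

lemma fiberEntropy_prodMk_le (hf : Measurable f) (hg : Measurable g)
    (hs : ∀ b ∉ s, μ (f ⁻¹' {b}) = 0) (ht : ∀ c ∉ t, μ (g ⁻¹' {c}) = 0) :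
    fiberEntropy μ (fun x => (f x, g x)) (s ×ˢ t) ≤ fiberEntropy μ f s + fiberEntropy μ g t := by
  have hfib : ∀ b c, (fun x => (f x, g x)) ⁻¹' {(b, c)} = f ⁻¹' {b} ∩ g ⁻¹' {c} := by
    intro b c; ext x; simp
  have hrow : ∀ b, (μ (f ⁻¹' {b})).toReal = ∑ c ∈ t, (μ (f ⁻¹' {b} ∩ g ⁻¹' {c})).toReal :=
    fun b => toReal_measure_eq_sum_inter_fiber hg ht (hf (measurableSet_singleton b))
  have hcol : ∀ c, (μ (g ⁻¹' {c})).toReal = ∑ b ∈ s, (μ (f ⁻¹' {b} ∩ g ⁻¹' {c})).toReal := by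
    intro c
    simp_rw [Set.inter_comm (f ⁻¹' _)]
    exact toReal_measure_eq_sum_inter_fiber hf hs (hg (measurableSet_singleton c))
  have htot : ∑ b ∈ s, ∑ c ∈ t, (μ (f ⁻¹' {b} ∩ g ⁻¹' {c})).toReal ≤ 1 := by
    simp_rw [← hrow]
    have := toReal_measure_eq_sum_inter_fiber (μ := μ) hf hs MeasurableSet.univ
    simp only [Set.univ_inter, measure_univ, ENNReal.toReal_one] at this
    exact this.symm.le
  simp only [fiberEntropy, Finset.sum_product, hfib, hrow, hcol]
  exact sum_sum_plog_le s t _ (fun _ _ _ _ => ENNReal.toReal_nonneg) htot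

lemma fiberEntropy_le_add_logb (hf : Measurable f) (hg : Measurable g)
    (hs : ∀ b ∉ s, μ (f ⁻¹' {b}) = 0) (ht : ∀ c ∉ t, μ (g ⁻¹' {c}) = 0) {K : ℕ}
    (hK : ∀ c, ∃ S : Finset β, S.card ≤ K ∧ ∀ x, g x = c → f x ∈ S) :
    fiberEntropy μ f s ≤ fiberEntropy μ g t + Real.logb 2 K := by
  set G : γ → β → ℝ := fun c b => (μ (g ⁻¹' {c} ∩ f ⁻¹' {b})).toReal
  have hG : ∀ c b, 0 ≤ G c b := fun _ _ => ENNReal.toReal_nonneg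
  have hfib : ∀ b, (μ (f ⁻¹' {b})).toReal = ∑ c ∈ t, G c b := by
    intro b
    simp_rw [G, Set.inter_comm (g ⁻¹' _)]
    exact toReal_measure_eq_sum_inter_fiber hg ht (hf (measurableSet_singleton b))
  have hgib : ∀ c, ∑ b ∈ s, G c b = (μ (g ⁻¹' {c})).toReal := fun c =>
    (toReal_measure_eq_sum_inter_fiber hf hs (hg (measurableSet_singleton c))).symm
  have htot : ∑ c ∈ t, (μ (g ⁻¹' {c})).toReal = 1 := by
    have := toReal_measure_eq_sum_inter_fiber (μ := μ) hg ht MeasurableSet.univ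
    simpa using this.symm
  have hcard : ∀ c, (s.filter (G c · ≠ 0)).card ≤ K := by
    intro c
    obtain ⟨S, hSK, hS⟩ := hK c
    refine (Finset.card_le_card fun b hb => ?_).trans hSK
    obtain ⟨x, hxg, hxf⟩ := nonempty_of_measure_ne_zero
      (ENNReal.toReal_ne_zero.mp (Finset.mem_filter.mp hb).2).1
    exact hxf ▸ hS x hxg
  calc fiberEntropy μ f s = ∑ b ∈ s, plog (∑ c ∈ t, G c b) := by simp only [fiberEntropy, hfib]
    _ ≤ ∑ b ∈ s, ∑ c ∈ t, plog (G c b) :=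
        Finset.sum_le_sum fun b _ => plog_sum_le t _ fun c _ => hG c b
    _ = ∑ c ∈ t, ∑ b ∈ s, plog (G c b) := Finset.sum_comm
    _ ≤ ∑ c ∈ t, (plog (μ (g ⁻¹' {c})).toReal + (μ (g ⁻¹' {c})).toReal * Real.logb 2 K) :=
        Finset.sum_le_sum fun c _ => hgib c ▸ sum_plog_le_of_card_le s _ (fun b _ => hG c b)
          (hcard c)
    _ = fiberEntropy μ g t + Real.logb 2 K := by
        rw [Finset.sum_add_distrib, ← Finset.sum_mul, htot, one_mul, fiberEntropy]

end FiberEntropy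

section Dyadic

def projCellIdx (w : ℂ) (n : ℕ) (z : ℂ) : ℤ := ⌊(2 : ℝ) ^ n * projMap w z⌋

def intBox (b : ℝ) : Finset ℤ := Finset.Icc ⌊-b⌋ ⌊b⌋

lemma floor_mem_intBox {x b : ℝ} (h : |x| ≤ b) : ⌊x⌋ ∈ intBox b :=
  Finset.mem_Icc.mpr ⟨Int.floor_mono (neg_le_of_abs_le h), Int.floor_mono (le_of_abs_le h)⟩

lemma projMap_eq_re_mul_conj (w z : ℂ) : projMap w z = (z * (starRingEnd ℂ) w).re := by
  simp only [projMap, Complex.mul_re, Complex.conj_re, Complex.conj_im]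
  ring

lemma abs_projMap_le {w : ℂ} (hw : ‖w‖ = 1) (z : ℂ) : |projMap w z| ≤ ‖z‖ := by
  rw [projMap_eq_re_mul_conj]
  simpa [hw] using Complex.abs_re_le_norm (z * (starRingEnd ℂ) w)

lemma measurable_projMap (w : ℂ) : Measurable (projMap w) :=
  (Complex.measurable_re.mul_const _).add (Complex.measurable_im.mul_const _)

lemma measurable_projCellIdx (w : ℂ) (n : ℕ) : Measurable (projCellIdx w n) :=
  ((measurable_projMap w).const_mul _).floor

lemma measurable_cellIdx (n : ℕ) : Measurable (cellIdx n) :=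
  ((Complex.measurable_re.const_mul _).floor).prodMk ((Complex.measurable_im.const_mul _).floor)

lemma cellIdx_preimage_singleton (n : ℕ) (a : ℤ × ℤ) : cellIdx n ⁻¹' {a} = cell2 n a := by
  ext z
  simp only [Set.mem_preimage, Set.mem_singleton_iff, cellIdx, cell2, Set.mem_ofPred_eq,
    Prod.ext_iff, Int.floor_eq_iff, and_assoc]

lemma mem_dyadicCellOf_iff {n : ℕ} {x z : ℂ} :
    z ∈ dyadicCellOf n x ↔ cellIdx n z = cellIdx n x := by
  rw [dyadicCellOf, ← cellIdx_preimage_singleton]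
  rfl

lemma projMap_preimage_cell1 (w : ℂ) (n : ℕ) (a : ℤ) :
    projMap w ⁻¹' cell1 n a = projCellIdx w n ⁻¹' {a} := by
  ext z
  simp only [Set.mem_preimage, cell1, Set.mem_ofPred_eq, Set.mem_singleton_iff, projCellIdx,
    Int.floor_eq_iff]

lemma measurableSet_cell1 (n : ℕ) (a : ℤ) : MeasurableSet (cell1 n a) :=
  measurableSet_le measurable_const (measurable_id.const_mul _) |>.inter
    (measurableSet_lt (measurable_id.const_mul _) measurable_const)

lemma abs_sub_lt_one_of_floor_eq {x y : ℝ} (h : ⌊x⌋ = ⌊y⌋) : |x - y| < 1 := by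
  have := Int.floor_le x; have := Int.lt_floor_add_one x
  have := Int.floor_le y; have := Int.lt_floor_add_one y
  rw [h] at *
  rw [abs_sub_lt_iff]
  constructor <;> linarith

lemma dyadicCellOf_subset_closedBall (n : ℕ) (x : ℂ) :
    dyadicCellOf n x ⊆ Metric.closedBall x (2 * (1 / 2) ^ n) := by
  intro z hz
  have hidx := mem_dyadicCellOf_iff.mp hz
  have h2n : (0 : ℝ) < 2 ^ n := by positivity
  have hcoord : ∀ {a b : ℝ}, ⌊2 ^ n * a⌋ = ⌊2 ^ n * b⌋ → |a - b| ≤ (1 / 2) ^ n := by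
    intro a b h
    have := abs_sub_lt_one_of_floor_eq h
    rw [← mul_sub, abs_mul, abs_of_pos h2n] at this
    rw [one_div_pow, le_div_iff₀ h2n]
    linarith
  have hre := hcoord (congrArg Prod.fst hidx)
  have him := hcoord (congrArg Prod.snd hidx)
  rw [Metric.mem_closedBall, Complex.dist_eq]
  calc ‖z - x‖ ≤ |(z - x).re| + |(z - x).im| := Complex.norm_le_abs_re_add_abs_im _
    _ ≤ 2 * (1 / 2) ^ n := by rw [Complex.sub_re, Complex.sub_im]; linarith

section BoundedSupport

variable {μ : Measure ℂ} {B : ℝ}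

lemma measure_preimage_singleton_eq_zero (hμ : μ {z | B < ‖z‖} = 0) {β : Type*} {f : ℂ → β}
    {s : Finset β} (hf : ∀ z, ‖z‖ ≤ B → f z ∈ s) {b : β} (hb : b ∉ s) : μ (f ⁻¹' {b}) = 0 :=
  measure_mono_null (fun z hz => lt_of_not_ge fun h => hb (hz ▸ hf z h)) hμ

lemma cellIdx_mem_intBox {z : ℂ} (hz : ‖z‖ ≤ B) (n : ℕ) :
    cellIdx n z ∈ intBox (2 ^ n * B) ×ˢ intBox (2 ^ n * B) := by
  have hbound : ∀ {x : ℝ}, |x| ≤ ‖z‖ → |(2 : ℝ) ^ n * x| ≤ 2 ^ n * B := fun h => by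
    rw [abs_mul, abs_of_pos (by positivity)]
    exact mul_le_mul_of_nonneg_left (h.trans hz) (by positivity)
  exact Finset.mem_product.mpr ⟨floor_mem_intBox (hbound (Complex.abs_re_le_norm z)),
    floor_mem_intBox (hbound (Complex.abs_im_le_norm z))⟩

lemma projCellIdx_mem_intBox {w z : ℂ} (hw : ‖w‖ = 1) (hz : ‖z‖ ≤ B) (n : ℕ) :
    projCellIdx w n z ∈ intBox (2 ^ n * B) := by
  refine floor_mem_intBox ?_
  rw [abs_mul, abs_of_pos (by positivity)]
  exact mul_le_mul_of_nonneg_left ((abs_projMap_le hw z).trans hz) (by positivity)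

lemma H2_eq_fiberEntropy (hμ : μ {z | B < ‖z‖} = 0) (n : ℕ) :
    H2 μ n = fiberEntropy μ (cellIdx n) (intBox (2 ^ n * B) ×ˢ intBox (2 ^ n * B)) := by
  rw [H2, fiberEntropy, tsum_eq_sum (s := intBox (2 ^ n * B) ×ˢ intBox (2 ^ n * B)) fun a ha => ?_]
  · simp only [cellIdx_preimage_singleton]
  · rw [← cellIdx_preimage_singleton,
      measure_preimage_singleton_eq_zero hμ (fun z hz => cellIdx_mem_intBox hz n) ha]
    simp [plog]

lemma H1_map_eq_fiberEntropy (hμ : μ {z | B < ‖z‖} = 0) {w : ℂ} (hw : ‖w‖ = 1) (n : ℕ) :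
    H1 (μ.map (projMap w)) n = fiberEntropy μ (projCellIdx w n) (intBox (2 ^ n * B)) := by
  have hmap : ∀ a, μ.map (projMap w) (cell1 n a) = μ (projCellIdx w n ⁻¹' {a}) := fun a => by
    rw [Measure.map_apply (measurable_projMap w) (measurableSet_cell1 n a),
      projMap_preimage_cell1]
  rw [H1, fiberEntropy, tsum_eq_sum (s := intBox (2 ^ n * B)) fun a ha => ?_]
  · simp only [hmap]
  · rw [hmap, measure_preimage_singleton_eq_zero hμ
      (fun z hz => projCellIdx_mem_intBox hw hz n) ha]
    simp [plog]

end BoundedSupport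

end Dyadic

section TwoProjections

/-- `|sin θ|` for the angle `θ` between the unit vectors `w₁` and `w₂`. -/
def sinAngle (w₁ w₂ : ℂ) : ℝ := |((starRingEnd ℂ) w₁ * w₂).im|

lemma sinAngle_le_one {w₁ w₂ : ℂ} (hw₁ : ‖w₁‖ = 1) (hw₂ : ‖w₂‖ = 1) : sinAngle w₁ w₂ ≤ 1 := by
  simpa [sinAngle, hw₁, hw₂] using Complex.abs_im_le_norm ((starRingEnd ℂ) w₁ * w₂)

lemma norm_le_of_abs_projMap_lt_one {w₁ w₂ ζ : ℂ} (hw₁ : ‖w₁‖ = 1) (hw₂ : ‖w₂‖ = 1)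
    (hd : 0 < sinAngle w₁ w₂) (h₁ : |projMap w₁ ζ| < 1) (h₂ : |projMap w₂ ζ| < 1) :
    ‖ζ‖ ≤ 3 / sinAngle w₁ w₂ := by
  set d := sinAngle w₁ w₂
  set A := ζ * (starRingEnd ℂ) w₁
  set β := w₁ * (starRingEnd ℂ) w₂
  have hA : ‖A‖ = ‖ζ‖ := by simp [A, hw₁]
  have hβre : |β.re| ≤ 1 := by simpa [β, hw₁, hw₂] using Complex.abs_re_le_norm β
  have hβim : |β.im| = d := by
    simp only [β, d, sinAngle, Complex.mul_im, Complex.conj_re, Complex.conj_im]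
    rw [← abs_neg]
    ring_nf
  have hAre : |A.re| < 1 := (projMap_eq_re_mul_conj w₁ ζ) ▸ h₁
  have hproj₂ : projMap w₂ ζ = A.re * β.re - A.im * β.im := by
    have : ζ * (starRingEnd ℂ) w₂ = A * β := by
      rw [show A * β = ζ * ((starRingEnd ℂ) w₁ * w₁) * (starRingEnd ℂ) w₂ by simp only [A, β]; ring,
        Complex.conj_mul', hw₁]
      simp
    rw [projMap_eq_re_mul_conj, this, Complex.mul_re]
  have hAim : |A.im| * d < 2 := by
    rw [← hβim, ← abs_mul,
      show A.im * β.im = A.re * β.re - projMap w₂ ζ by rw [hproj₂]; ring]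
    calc |A.re * β.re - projMap w₂ ζ| ≤ |A.re| * |β.re| + |projMap w₂ ζ| := by
          rw [← abs_mul]; exact abs_sub _ _
      _ < 2 := by nlinarith [mul_le_mul_of_nonneg_left hβre (abs_nonneg A.re)]
  have hd1 : d ≤ 1 := sinAngle_le_one hw₁ hw₂
  rw [← hA, le_div_iff₀ hd]
  nlinarith [mul_le_mul_of_nonneg_right (Complex.norm_le_abs_re_add_abs_im A) hd.le,
    mul_le_mul_of_nonneg_right hAre.le hd.le]

def latticeSquare (a : ℤ × ℤ) (M : ℕ) : Finset (ℤ × ℤ) :=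
  Finset.Icc (a.1 - M) (a.1 + M) ×ˢ Finset.Icc (a.2 - M) (a.2 + M)

lemma card_latticeSquare (a : ℤ × ℤ) (M : ℕ) : (latticeSquare a M).card = (2 * M + 1) ^ 2 := by
  rw [latticeSquare, Finset.card_product, Int.card_Icc, Int.card_Icc, sq]
  congr 1 <;> omega

lemma floor_mem_Icc_of_abs_sub_le {x y r : ℝ} (h : |x - y| ≤ r) :
    ⌊x⌋ ∈ Finset.Icc (⌊y⌋ - (⌈r⌉₊ + 1 : ℕ)) (⌊y⌋ + (⌈r⌉₊ + 1 : ℕ)) := by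
  obtain ⟨h₁, h₂⟩ := abs_le.mp h
  have := Int.floor_le x; have := Int.lt_floor_add_one x
  have := Int.floor_le y; have := Int.lt_floor_add_one y
  have := Nat.le_ceil r
  rw [Finset.mem_Icc]
  constructor
  · have : ((⌊y⌋ - (⌈r⌉₊ + 1 : ℕ) : ℤ) : ℝ) < ⌊x⌋ + 1 := by push_cast; linarith
    exact_mod_cast Int.lt_add_one_iff.mp (by exact_mod_cast this)
  · have : (⌊x⌋ : ℝ) < ((⌊y⌋ + (⌈r⌉₊ + 1 : ℕ) : ℤ) : ℝ) + 1 := by push_cast; linarith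
    exact Int.lt_add_one_iff.mp (by exact_mod_cast this)

lemma cellIdx_mem_latticeSquare {w₁ w₂ z z₀ : ℂ} (hw₁ : ‖w₁‖ = 1) (hw₂ : ‖w₂‖ = 1)
    (hd : 0 < sinAngle w₁ w₂) {n : ℕ} (h₁ : projCellIdx w₁ n z = projCellIdx w₁ n z₀)
    (h₂ : projCellIdx w₂ n z = projCellIdx w₂ n z₀) :
    cellIdx n z ∈ latticeSquare (cellIdx n z₀) (⌈3 / sinAngle w₁ w₂⌉₊ + 1) := by
  set ζ : ℂ := ((2 : ℝ) ^ n : ℝ) * (z - z₀)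
  have hproj : ∀ w, projCellIdx w n z = projCellIdx w n z₀ → |projMap w ζ| < 1 := by
    intro w h
    have : projMap w ζ = 2 ^ n * projMap w z - 2 ^ n * projMap w z₀ := by
      simp only [ζ, projMap, Complex.re_ofReal_mul, Complex.im_ofReal_mul, Complex.sub_re,
        Complex.sub_im]
      ring
    rw [this]
    exact abs_sub_lt_one_of_floor_eq h
  have hζ := norm_le_of_abs_projMap_lt_one hw₁ hw₂ hd (hproj w₁ h₁) (hproj w₂ h₂)
  have hre : |2 ^ n * z.re - 2 ^ n * z₀.re| ≤ 3 / sinAngle w₁ w₂ := by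
    refine le_trans (le_of_eq ?_) ((Complex.abs_re_le_norm ζ).trans hζ)
    simp only [ζ, Complex.re_ofReal_mul, Complex.sub_re, mul_sub]
  have him : |2 ^ n * z.im - 2 ^ n * z₀.im| ≤ 3 / sinAngle w₁ w₂ := by
    refine le_trans (le_of_eq ?_) ((Complex.abs_im_le_norm ζ).trans hζ)
    simp only [ζ, Complex.im_ofReal_mul, Complex.sub_im, mul_sub]
  exact Finset.mem_product.mpr ⟨floor_mem_Icc_of_abs_sub_le hre, floor_mem_Icc_of_abs_sub_le him⟩

theorem H2_le_H1_add_H1 {μ : Measure ℂ} [IsProbabilityMeasure μ] {B : ℝ}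
    (hμ : μ {z | B < ‖z‖} = 0) {w₁ w₂ : ℂ} (hw₁ : ‖w₁‖ = 1) (hw₂ : ‖w₂‖ = 1)
    (hd : 0 < sinAngle w₁ w₂) (n : ℕ) :
    H2 μ n ≤ H1 (μ.map (projMap w₁)) n + H1 (μ.map (projMap w₂)) n +
      2 * Real.logb 2 (11 / sinAngle w₁ w₂) := by
  set d := sinAngle w₁ w₂
  set M := ⌈3 / d⌉₊ + 1
  set box := intBox (2 ^ n * B)
  set g : ℂ → ℤ × ℤ := fun z => (projCellIdx w₁ n z, projCellIdx w₂ n z)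
  have hg : Measurable g := (measurable_projCellIdx w₁ n).prodMk (measurable_projCellIdx w₂ n)
  have hK : ∀ c, ∃ S : Finset (ℤ × ℤ), S.card ≤ (2 * M + 1) ^ 2 ∧
      ∀ z, g z = c → cellIdx n z ∈ S := by
    intro c
    by_cases hc : ∃ z₀, g z₀ = c
    · obtain ⟨z₀, rfl⟩ := hc
      refine ⟨latticeSquare (cellIdx n z₀) M, (card_latticeSquare _ _).le, fun z hz => ?_⟩
      exact cellIdx_mem_latticeSquare hw₁ hw₂ hd (congrArg Prod.fst hz) (congrArg Prod.snd hz)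
    · exact ⟨∅, by simp, fun z hz => absurd ⟨z, hz⟩ hc⟩
  have hKd : ((2 * M + 1) ^ 2 : ℕ) ≤ (11 / d) ^ 2 := by
    have hd1 : d ≤ 1 := sinAngle_le_one hw₁ hw₂
    have hM : (M : ℝ) < 3 / d + 2 := by
      simp only [M, Nat.cast_add, Nat.cast_one]
      linarith [Nat.ceil_lt_add_one (div_nonneg zero_le_three hd.le)]
    have h5 : (5 : ℝ) ≤ 5 / d := by rw [le_div_iff₀ hd]; linarith
    push_cast
    gcongr
    calc 2 * (M : ℝ) + 1 ≤ 6 / d + 5 := by linarith [show 6 / d = 2 * (3 / d) by ring]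
      _ ≤ 11 / d := by rw [show (11 : ℝ) / d = 6 / d + 5 / d by ring]; linarith
  rw [H2_eq_fiberEntropy hμ, H1_map_eq_fiberEntropy hμ hw₁, H1_map_eq_fiberEntropy hμ hw₂]
  calc fiberEntropy μ (cellIdx n) (box ×ˢ box)
      ≤ fiberEntropy μ g (box ×ˢ box) + Real.logb 2 ((2 * M + 1) ^ 2 : ℕ) :=
        fiberEntropy_le_add_logb (measurable_cellIdx n) hg
          (fun _ ha => measure_preimage_singleton_eq_zero hμ
            (fun z hz => cellIdx_mem_intBox hz n) ha)
          (fun _ ha => measure_preimage_singleton_eq_zero hμ (fun z hz => Finset.mem_product.mpr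
            ⟨projCellIdx_mem_intBox hw₁ hz n, projCellIdx_mem_intBox hw₂ hz n⟩) ha) hK
    _ ≤ fiberEntropy μ (projCellIdx w₁ n) box + fiberEntropy μ (projCellIdx w₂ n) box +
          Real.logb 2 ((11 / d) ^ 2) := by
        refine add_le_add (fiberEntropy_prodMk_le (measurable_projCellIdx w₁ n)
          (measurable_projCellIdx w₂ n) (fun _ ha => measure_preimage_singleton_eq_zero hμ
            (fun z hz => projCellIdx_mem_intBox hw₁ hz n) ha)
          (fun _ ha => measure_preimage_singleton_eq_zero hμ
            (fun z hz => projCellIdx_mem_intBox hw₂ hz n) ha)) ?_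
        exact Real.logb_le_logb_of_le one_lt_two (by positivity) hKd
    _ = _ := by rw [Real.logb_pow]; push_cast; ring

end TwoProjections

section ExactDimension

lemma eventually_measure_closedBall_le_rpow {μ : Measure ℂ} {x : ℂ} {α γ : ℝ}
    (hx : Tendsto (fun r : ℝ => Real.log (μ (Metric.closedBall x r)).toReal / Real.log r)
      (𝓝[>] 0) (𝓝 α)) (hγ : 0 ≤ γ) (hγα : γ < α) :
    ∀ᶠ r in 𝓝[>] 0, (μ (Metric.closedBall x r)).toReal ≤ r ^ γ := by
  filter_upwards [hx.eventually (eventually_gt_nhds hγα), Ioo_mem_nhdsGT one_pos] with r hr hr01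
  have hlogr : Real.log r < 0 := Real.log_neg hr01.1 hr01.2
  -- a null ball would make the ratio `log 0 / log r = 0 ≤ γ`
  have hpos : 0 < (μ (Metric.closedBall x r)).toReal := by
    refine ENNReal.toReal_nonneg.lt_of_ne fun h => ?_
    rw [← h, Real.log_zero, zero_div] at hr
    linarith
  have hlog : Real.log (μ (Metric.closedBall x r)).toReal < Real.log (r ^ γ) := by
    rw [Real.log_rpow hr01.1]
    exact (lt_div_iff_of_neg hlogr).mp hr
  exact ((Real.log_lt_log_iff hpos (Real.rpow_pos_of_pos hr01.1 _)).mp hlog).le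

lemma eventually_measure_dyadicCellOf_le {μ : Measure ℂ} [IsFiniteMeasure μ] {x : ℂ} {α γ : ℝ}
    (hx : Tendsto (fun r : ℝ => Real.log (μ (Metric.closedBall x r)).toReal / Real.log r)
      (𝓝[>] 0) (𝓝 α)) (hγ : 0 ≤ γ) (hγα : γ < α) :
    ∀ᶠ n : ℕ in atTop, (μ (dyadicCellOf n x)).toReal ≤ (2 * (1 / 2) ^ n) ^ γ := by
  have hr : Tendsto (fun n : ℕ => 2 * (1 / 2 : ℝ) ^ n) atTop (𝓝[>] 0) := by
    refine tendsto_nhdsWithin_of_tendsto_nhds_of_eventually_within _ ?_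
      (Eventually.of_forall fun n => by simp only [Set.mem_Ioi]; positivity)
    simpa using (tendsto_pow_atTop_nhds_zero_of_lt_one (by norm_num : (0 : ℝ) ≤ 1 / 2)
      (by norm_num)).const_mul 2
  filter_upwards [hr.eventually (eventually_measure_closedBall_le_rpow hx hγ hγα)] with n hn
  exact (ENNReal.toReal_mono (measure_ne_top μ _)
    (measure_mono (dyadicCellOf_subset_closedBall n x))).trans hn

lemma exists_lt_measure_setOf_forall_ge {α : Type*} [MeasurableSpace α] {μ : Measure α}
    {p : ℕ → α → Prop} (h : ∀ᵐ x ∂μ, ∀ᶠ n in atTop, p n x) {δ : ℝ≥0∞} (hδ : δ < μ Set.univ) :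
    ∃ N, δ < μ {x | ∀ n ≥ N, p n x} := by
  have hmono : Monotone fun N => {x | ∀ n ≥ N, p n x} :=
    fun N N' hN x hx n hn => hx n (hN.trans hn)
  have hunion : μ (⋃ N, {x | ∀ n ≥ N, p n x}) = μ Set.univ := by
    refine measure_congr (ae_eq_univ.mpr (measure_mono_null (fun x hx => ?_) (ae_iff.mp h)))
    simp only [Set.mem_compl_iff, Set.mem_iUnion, Set.mem_ofPred_eq, not_exists] at hx ⊢
    rwa [eventually_atTop, not_exists]
  exact ((tendsto_measure_iUnion_atTop hmono).eventually
    (eventually_gt_nhds (hunion ▸ hδ))).exists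

lemma mul_neg_logb_le_H2 {μ : Measure ℂ} [IsProbabilityMeasure μ] {B : ℝ}
    (hμ : μ {z | B < ‖z‖} = 0) {n : ℕ} {G : Set ℂ} {t : ℝ} (ht0 : 0 ≤ t) (ht : t ≤ 1)
    (hG : ∀ x ∈ G, (μ (dyadicCellOf n x)).toReal ≤ t) :
    (μ G).toReal * -Real.logb 2 t ≤ H2 μ n := by
  set box := intBox (2 ^ n * B) ×ˢ intBox (2 ^ n * B)
  set T := box.filter fun a => (cell2 n a ∩ G).Nonempty
  have hT : ∀ a ∈ T, (μ (cell2 n a)).toReal ≤ t := by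
    intro a ha
    obtain ⟨x, hxa, hxG⟩ := (Finset.mem_filter.mp ha).2
    rw [← cellIdx_preimage_singleton] at hxa
    simpa [dyadicCellOf, show cellIdx n x = a from hxa] using hG x hxG
  have hcover : G ⊆ (⋃ a ∈ T, cell2 n a) ∪ {z | B < ‖z‖} := by
    intro x hxG
    by_cases hx : ‖x‖ ≤ B
    · refine Or.inl (Set.mem_biUnion (x := cellIdx n x) (Finset.mem_filter.mpr
        ⟨cellIdx_mem_intBox hx n, x, ?_, hxG⟩) ?_) <;>
      · rw [← cellIdx_preimage_singleton]; rfl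
    · exact Or.inr (lt_of_not_ge hx)
  have hGT : (μ G).toReal ≤ ∑ a ∈ T, (μ (cell2 n a)).toReal := by
    rw [← ENNReal.toReal_sum fun a _ => measure_ne_top μ _]
    refine ENNReal.toReal_mono (ENNReal.sum_ne_top.mpr fun a _ => measure_ne_top μ _) ?_
    calc μ G ≤ μ (⋃ a ∈ T, cell2 n a) + μ {z | B < ‖z‖} :=
          (measure_mono hcover).trans (measure_union_le _ _)
      _ ≤ ∑ a ∈ T, μ (cell2 n a) := by rw [hμ, add_zero]; exact measure_biUnion_finset_le T _
  have hlogt : 0 ≤ -Real.logb 2 t := neg_nonneg.mpr (Real.logb_nonpos one_lt_two ht0 ht)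
  calc (μ G).toReal * -Real.logb 2 t ≤ ∑ a ∈ T, (μ (cell2 n a)).toReal * -Real.logb 2 t := by
        rw [← Finset.sum_mul]; exact mul_le_mul_of_nonneg_right hGT hlogt
    _ ≤ ∑ a ∈ T, plog (μ (cell2 n a)).toReal :=
        Finset.sum_le_sum fun a ha => mul_neg_logb_le_plog ENNReal.toReal_nonneg (hT a ha)
    _ ≤ ∑ a ∈ box, plog (μ (cell2 n a)).toReal :=
        Finset.sum_le_sum_of_subset_of_nonneg (Finset.filter_subset _ _) fun a _ _ =>
          plog_nonneg ENNReal.toReal_nonneg (ENNReal.toReal_le_of_le_ofReal zero_le_one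
            (by simpa using prob_le_one))
    _ = H2 μ n := by
        rw [H2_eq_fiberEntropy hμ, fiberEntropy]
        simp only [box, cellIdx_preimage_singleton]

theorem eventually_mul_le_H2 {μ : Measure ℂ} [IsProbabilityMeasure μ] {B : ℝ}
    (hμ : μ {z | B < ‖z‖} = 0) {α : ℝ} (hdim : ExactDim μ α) {β : ℝ} (hβ : 0 ≤ β)
    (hβα : β < α) : ∀ᶠ n : ℕ in atTop, β * n ≤ H2 μ n := by
  set γ := (β + α) / 2
  have hγ : β < γ := by simp only [γ]; linarith
  have hβγ : ENNReal.ofReal (β / γ) < μ Set.univ := by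
    rw [measure_univ, ENNReal.ofReal_lt_one, div_lt_one (hβ.trans_lt hγ)]
    exact hγ
  obtain ⟨N, hN⟩ := exists_lt_measure_setOf_forall_ge
    (hdim.mono fun x hx => eventually_measure_dyadicCellOf_le hx (hβ.trans hγ.le)
      (by simp only [γ]; linarith)) hβγ
  set m := (μ {x | ∀ n ≥ N, (μ (dyadicCellOf n x)).toReal ≤ (2 * (1 / 2) ^ n) ^ γ}).toReal
  have hm : β < m * γ := by
    have := (div_lt_iff₀ (hβ.trans_lt hγ)).mp
      ((ENNReal.ofReal_lt_iff_lt_toReal (div_nonneg hβ (hβ.trans hγ.le))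
        (measure_ne_top μ _)).mp hN)
    linarith
  have hlarge : ∀ᶠ n : ℕ in atTop, m * γ ≤ (m * γ - β) * n :=
    (tendsto_natCast_atTop_atTop.const_mul_atTop (sub_pos.mpr hm)).eventually_ge_atTop _
  filter_upwards [eventually_ge_atTop N, eventually_ge_atTop 1, hlarge] with n hn hn1 hlarge
  have hlogb : -Real.logb 2 ((2 * (1 / 2) ^ n) ^ γ) = γ * (n - 1) := by
    rw [Real.logb_rpow_eq_mul_logb_of_pos (by positivity), Real.logb_mul two_ne_zero
      (by positivity), Real.logb_pow, one_div, Real.logb_inv, Real.logb_self_eq_one one_lt_two]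
    ring
  have ht : (2 * (1 / 2 : ℝ) ^ n) ^ γ ≤ 1 := by
    refine Real.rpow_le_one (by positivity) ?_ (hβ.trans hγ.le)
    have := pow_le_pow_of_le_one (by norm_num : (0 : ℝ) ≤ 1 / 2) (by norm_num) hn1
    linarith [pow_one (1 / 2 : ℝ)]
  calc β * n ≤ m * (γ * (n - 1)) := by nlinarith
    _ ≤ H2 μ n := hlogb ▸ mul_neg_logb_le_H2 hμ (by positivity) ht fun x hx => hx n hn

end ExactDimension

section Directions

lemma lineDir_sq {u : ℂ} (hu : u ≠ 0) : lineDir u ^ 2 = u := by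
  rw [lineDir, sq, ← Complex.exp_add, add_halves, Complex.exp_log hu]

lemma norm_lineDir {u : ℂ} (hu : ‖u‖ = 1) : ‖lineDir u‖ = 1 := by
  have h := congrArg (‖·‖) (lineDir_sq (norm_ne_zero_iff.mp (hu ▸ one_ne_zero)))
  simp only [norm_pow, hu] at h
  exact (pow_eq_one_iff_of_nonneg (norm_nonneg _) two_ne_zero).mp h

lemma norm_sub_eq_two_mul_sinAngle {u₁ u₂ : ℂ} (h₁ : ‖u₁‖ = 1) (h₂ : ‖u₂‖ = 1) :
    ‖u₁ - u₂‖ = 2 * sinAngle (lineDir u₁) (lineDir u₂) := by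
  set w := (starRingEnd ℂ) (lineDir u₁) * lineDir u₂
  have hw : ‖w‖ = 1 := by simp [w, norm_lineDir h₁, norm_lineDir h₂]
  have hconj : ∀ {z : ℂ}, ‖z‖ = 1 → z * (starRingEnd ℂ) z = 1 := fun hz => by
    rw [Complex.mul_conj', hz]; simp
  have hsq : w ^ 2 = (starRingEnd ℂ) u₁ * u₂ := by
    rw [mul_pow, ← map_pow, lineDir_sq (norm_ne_zero_iff.mp (h₁ ▸ one_ne_zero)),
      lineDir_sq (norm_ne_zero_iff.mp (h₂ ▸ one_ne_zero))]
  have hkey : u₁ - u₂ = u₁ * w * ((starRingEnd ℂ) w - w) := by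
    rw [mul_assoc, mul_sub, hconj hw, ← sq, hsq, mul_sub, mul_one, ← mul_assoc, hconj h₁,
      one_mul]
  have hd : sinAngle (lineDir u₁) (lineDir u₂) = |w.im| := rfl
  clear_value w
  have hsub : (starRingEnd ℂ) w - w = ((-(2 * w.im) : ℝ) : ℂ) * Complex.I := by
    apply Complex.ext <;> simp; ring
  rw [hkey, hsub, norm_mul, norm_mul, norm_mul, h₁, hw, Complex.norm_real, Complex.norm_I,
    Real.norm_eq_abs, abs_neg, abs_mul, abs_two, hd]
  ring

lemma norm_sub_le_of_H1_le {μ : Measure ℂ} [IsProbabilityMeasure μ] {B : ℝ}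
    (hμ : μ {z | B < ‖z‖} = 0) {u₁ u₂ : ℂ} (hu₁ : ‖u₁‖ = 1) (hu₂ : ‖u₂‖ = 1) {n : ℕ} {a : ℝ}
    (h₁ : H1 (μ.map (projMap (lineDir u₁))) n ≤ a) (h₂ : H1 (μ.map (projMap (lineDir u₂))) n ≤ a) :
    ‖u₁ - u₂‖ ≤ 22 * 2 ^ ((2 * a - H2 μ n) / 2) := by
  rw [norm_sub_eq_two_mul_sinAngle hu₁ hu₂]
  set d := sinAngle (lineDir u₁) (lineDir u₂)
  by_cases hd0 : d = 0
  · rw [hd0, mul_zero]; positivity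
  have hd : 0 < d := (abs_nonneg _).lt_of_ne' hd0
  have hH := H2_le_H1_add_H1 hμ (norm_lineDir hu₁) (norm_lineDir hu₂) hd n
  have hlog : (H2 μ n - 2 * a) / 2 ≤ Real.logb 2 (11 / d) := by linarith
  have h11 : (2 : ℝ) ^ ((H2 μ n - 2 * a) / 2) ≤ 11 / d :=
    (Real.le_logb_iff_rpow_le one_lt_two (by positivity)).mp hlog
  rw [show (2 * a - H2 μ n) / 2 = -((H2 μ n - 2 * a) / 2) by ring, Real.rpow_neg zero_le_two]
  rw [le_div_iff₀ hd] at h11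
  have hpos : (0 : ℝ) < 2 ^ ((H2 μ n - 2 * a) / 2) := by positivity
  rw [← div_eq_mul_inv, le_div_iff₀ hpos]
  nlinarith

end Directions

section InvariantMeasures

lemma measureReal_closedBall_le_half {ξ : Measure ℂ} [IsProbabilityMeasure ξ] {g x : ℂ} {ρ : ℝ}
    (hξ : ξ.map (g * ·) = ξ) (hx : ‖x‖ = 1) (hρ : 2 * ρ < ‖g - 1‖ * (1 - ρ)) :
    ξ.real (Metric.closedBall x ρ) ≤ 1 / 2 := by
  set A := Metric.closedBall x ρ
  have hg : Measurable (g * ·) := measurable_id.const_mul g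
  have hpre : ξ.real ((g * ·) ⁻¹' A) = ξ.real A := by
    rw [measureReal_def, measureReal_def, ← Measure.map_apply hg measurableSet_closedBall, hξ]
  -- the rotation by `g` moves every point near the circle by more than the diameter of `A`
  have hdisj : Disjoint A ((g * ·) ⁻¹' A) := by
    refine Set.disjoint_left.mpr fun z hz hgz => ?_
    simp only [A, Set.mem_preimage, Metric.mem_closedBall, dist_eq_norm] at hz hgz
    have hz' : 1 - ρ ≤ ‖z‖ := by linarith [norm_sub_norm_le x z, norm_sub_rev x z]
    have hmove : ‖g - 1‖ * ‖z‖ ≤ 2 * ρ := by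
      rw [← norm_mul, show (g - 1) * z = (g * z - x) - (z - x) by ring]
      linarith [norm_sub_le (g * z - x) (z - x)]
    nlinarith [mul_le_mul_of_nonneg_left hz' (norm_nonneg (g - 1))]
  have := measureReal_union (μ := ξ) hdisj (hg measurableSet_closedBall)
  have := measureReal_le_one (μ := ξ) (s := A ∪ (g * ·) ⁻¹' A)
  linarith

lemma half_le_measureReal_of_diam_le {ξ : Measure ℂ} [IsProbabilityMeasure ξ] {g : ℂ} {ρ : ℝ}
    (hξ : ξ.map (g * ·) = ξ) {K S : Set ℂ} (hK : K ⊆ Metric.sphere 0 1) (hKξ : ξ K = 1)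
    (hclose : ∀ u₁ ∈ K \ S, ∀ u₂ ∈ K \ S, ‖u₁ - u₂‖ ≤ ρ) (hρ : 2 * ρ < ‖g - 1‖ * (1 - ρ)) :
    1 / 2 ≤ ξ.real S := by
  have hK1 : ξ.real K = 1 := by simp [measureReal_def, hKξ]
  rcases (K \ S).eq_empty_or_nonempty with h | ⟨x, hx⟩
  · linarith [measureReal_mono (μ := ξ) (Set.sdiff_eq_empty.mp h)]
  have hcover : K ⊆ S ∪ Metric.closedBall x ρ := fun u hu => by
    by_cases huS : u ∈ S
    · exact Or.inl huS
    · exact Or.inr ((dist_eq_norm u x).trans_le (hclose u ⟨hu, huS⟩ x hx))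
  have hball := measureReal_closedBall_le_half hξ (mem_sphere_zero_iff_norm.mp (hK hx.1)) hρ
  linarith [measureReal_mono (μ := ξ) hcover, measureReal_union_le (μ := ξ) S
    (Metric.closedBall x ρ)]

end InvariantMeasures

theorem eventually_half_le_measureReal_projHn {μ : Measure ℂ} [IsProbabilityMeasure μ] {B : ℝ}
    (hμ : μ {z | B < ‖z‖} = 0) {α : ℝ} (hdim : ExactDim μ α) (h1 : 1 ≤ α) {κ : ℝ}
    (hκ0 : 0 ≤ κ) (hκ : κ < (2 - α) / 2) {g : ℂ} (hg : g ≠ 1) :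
    ∀ᶠ n : ℕ in atTop, ∀ (ξ : Measure ℂ) [IsProbabilityMeasure ξ], ξ.map (g * ·) = ξ →
      ∀ K ⊆ Metric.sphere 0 1, ξ K = 1 →
        1 / 2 ≤ ξ.real {u | α - 1 + κ ≤ projHn (lineDir u) μ n} := by
  -- `β` lies strictly between `2 (α - 1 + κ)` and `α`, and `c = (2 (α - 1 + κ) - β) / 2 < 0`
  set β := (3 * α - 2 + 2 * κ) / 2
  set c := (α - 2 + 2 * κ) / 4
  set ρ : ℕ → ℝ := fun n => 22 * ((2 : ℝ) ^ c) ^ n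
  have hρ : Tendsto ρ atTop (𝓝 0) := by
    simpa [ρ] using (tendsto_pow_atTop_nhds_zero_of_lt_one (by positivity)
      (Real.rpow_lt_one_of_one_lt_of_neg one_lt_two (by simp only [c]; linarith))).const_mul 22
  have hsmall : ∀ᶠ n in atTop, 2 * ρ n < ‖g - 1‖ * (1 - ρ n) := by
    have hlim := (hρ.const_mul 2).sub
      (((tendsto_const_nhds (x := (1 : ℝ))).sub hρ).const_mul ‖g - 1‖)
    simp only [mul_zero, sub_zero, mul_one, zero_sub] at hlim
    filter_upwards [hlim.eventually (eventually_lt_nhds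
      (neg_lt_zero.mpr (norm_pos_iff.mpr (sub_ne_zero.mpr hg))))] with n hn
    linarith
  filter_upwards [eventually_mul_le_H2 hμ hdim (β := β) (by simp only [β]; linarith)
      (by simp only [β]; linarith), hsmall, eventually_gt_atTop 0] with n hH2 hρn hn
  intro ξ _ hξ K hK hKξ
  have hbad : ∀ u ∈ K \ {u | α - 1 + κ ≤ projHn (lineDir u) μ n},
      H1 (μ.map (projMap (lineDir u))) n ≤ (α - 1 + κ) * n := fun u hu =>
    ((div_lt_iff₀ (Nat.cast_pos.mpr hn)).mp (not_le.mp hu.2)).le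
  refine half_le_measureReal_of_diam_le hξ hK hKξ (fun u₁ hu₁ u₂ hu₂ => ?_) hρn
  refine (norm_sub_le_of_H1_le hμ (mem_sphere_zero_iff_norm.mp (hK hu₁.1))
    (mem_sphere_zero_iff_norm.mp (hK hu₂.1)) (hbad u₁ hu₁) (hbad u₂ hu₂)).trans ?_
  simp only [ρ]
  rw [← Real.rpow_natCast, ← Real.rpow_mul zero_le_two]
  gcongr
  · exact one_le_two
  · simp only [β] at hH2
    simp only [c]
    linarith

namespace PlanarModel

variable {I : Type} [Fintype I] [MeasurableSpace I] (M : PlanarModel I)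

lemma norm_rotPt (i : I) : ‖M.rotPt i‖ = 1 := by
  rw [rotPt, norm_pow, norm_div, Complex.norm_real, norm_norm,
    div_self (norm_ne_zero_iff.mpr (M.lam_ne i)), one_pow]

lemma rotPt_ne_one {i : I} (him : (M.lam i).im ≠ 0) : M.rotPt i ≠ 1 := by
  have hne : ((‖M.lam i‖ : ℝ) : ℂ) ≠ 0 := by exact_mod_cast norm_ne_zero_iff.mpr (M.lam_ne i)
  intro h
  rw [rotPt, sq, mul_self_eq_one_iff] at h
  rcases h with h | h <;>
  · rw [div_eq_iff hne] at h
    exact him (by rw [h]; simp)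

lemma orbitClosure_subset_sphere {v : ℂ} (hv : ‖v‖ = 1) :
    M.orbitClosure v ⊆ Metric.sphere 0 1 := by
  have hgens : Submonoid.closure M.rotGens ≤ Submonoid.unitSphere ℂ := by
    rw [Submonoid.closure_le]
    rintro z ⟨i, rfl | rfl⟩ <;> simp [M.norm_rotPt i]
  refine closure_minimal ?_ Metric.isClosed_sphere
  rintro z ⟨g, hg, rfl⟩
  simpa [hv] using mem_sphere_zero_iff_norm.mp (hgens hg)

lemma exists_norm_codingTerm_le [Nonempty I] : ∃ C r : ℝ, 0 ≤ r ∧ r < 1 ∧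
    ∀ (ω : ℕ → I) (u : (n : ℕ) → Fin (M.k (ω n))) (n : ℕ),
      ‖(∏ j ∈ Finset.range n, M.lam (ω j)) * M.tr (ω n) (u n)‖ ≤ C * r ^ n := by
  obtain ⟨i₀, hi₀⟩ := Finite.exists_max fun i => ‖M.lam i‖
  refine ⟨∑ i, ∑ j, ‖M.tr i j‖, ‖M.lam i₀‖, norm_nonneg _, M.lam_lt i₀, fun ω u n => ?_⟩
  rw [norm_mul, norm_prod, mul_comm]
  gcongr
  · exact (Finset.single_le_sum (fun j _ => norm_nonneg (M.tr (ω n) j)) (Finset.mem_univ _)).trans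
      (Finset.single_le_sum (f := fun i => ∑ j, ‖M.tr i j‖)
        (fun i _ => Finset.sum_nonneg fun j _ => norm_nonneg _) (Finset.mem_univ _))
  · calc ∏ j ∈ Finset.range n, ‖M.lam (ω j)‖ ≤ ∏ _j ∈ Finset.range n, ‖M.lam i₀‖ :=
          Finset.prod_le_prod (fun _ _ => norm_nonneg _) fun j _ => hi₀ (ω j)
      _ = ‖M.lam i₀‖ ^ n := by rw [Finset.prod_const, Finset.card_range]

lemma continuous_codingMap [Nonempty I] (ω : ℕ → I) : Continuous (M.codingMap ω) := by
  obtain ⟨C, r, hr0, hr1, hC⟩ := M.exists_norm_codingTerm_le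
  exact continuous_tsum (fun n => continuous_const.mul (continuous_of_discreteTopology.comp
    (continuous_apply n))) ((summable_geometric_of_lt_one hr0 hr1).mul_left C) fun n u => hC ω u n

lemma exists_norm_codingMap_le [Nonempty I] :
    ∃ B : ℝ, ∀ (ω : ℕ → I) (u : (n : ℕ) → Fin (M.k (ω n))), ‖M.codingMap ω u‖ ≤ B := by
  obtain ⟨C, r, hr0, hr1, hC⟩ := M.exists_norm_codingTerm_le
  have hgeom := (hasSum_geometric_of_lt_one hr0 hr1).mul_left C
  exact ⟨C * (1 - r)⁻¹, fun ω u => tsum_of_norm_bounded hgeom (hC ω u)⟩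

lemma exists_measure_norm_gt_eq_zero [Nonempty I] {η : (ℕ → I) → Measure ℂ}
    (hη : M.IsCodingFamily η) :
    ∃ B : ℝ, ∀ ω, IsProbabilityMeasure (η ω) ∧ η ω {z | B < ‖z‖} = 0 := by
  obtain ⟨B, hB⟩ := M.exists_norm_codingMap_le
  refine ⟨B, fun ω => ?_⟩
  obtain ⟨μ, ⟨hμ, -⟩, hημ⟩ := hη ω
  rw [hημ]
  have hmeas := (M.continuous_codingMap ω).measurable
  refine ⟨Measure.isProbabilityMeasure_map hmeas.aemeasurable, ?_⟩
  rw [Measure.map_apply hmeas (measurableSet_lt measurable_const continuous_norm.measurable)]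
  convert measure_empty (μ := μ)
  exact Set.eq_empty_of_forall_notMem fun u hu => (hB ω u).not_gt hu

end PlanarModel

end SSmodel

/-- If 1 ≤ α < 2 then there are p₀, κ > 0 such that ℙ-a.s., asymptotically,
for every W ∈ ℝP¹ the ξ^{(W)}-measure of the set of directions V with
H_n(π_V η^(ω)) ≥ α − 1 + κ is at least p₀. (ℝP¹ is identified with the unit circle via the
squaring map; `lineDir u` is a fixed unit direction of the line corresponding to u.) -/
theorem stmt_8 {I : Type} [Fintype I] [MeasurableSpace I] (M : PlanarModel I)
    (hStar : M.AssumptionStar)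
    (η : (ℕ → I) → Measure ℂ) (hη : M.IsCodingFamily η)
    (α : ℝ) (hdim : ∀ᵐ ω ∂M.P, ExactDim (η ω) α) (h1 : 1 ≤ α) (h2 : α < 2) :
    ∃ p₀ : ℝ, 0 < p₀ ∧ ∃ κ : ℝ, 0 < κ ∧
      ∀ ξW : ℂ → Measure ℂ, (∀ v : ℂ, ‖v‖ = 1 → M.IsXiW v (ξW v)) →
        ∀ᵐ ω ∂M.P,
          p₀ ≤ Filter.liminf (fun n : ℕ =>
            ⨅ v : UnitVec,
              ((ξW v.1) {u : ℂ | α - 1 + κ ≤ projHn (lineDir u) (η ω) n}).toReal)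
            Filter.atTop := by
  obtain ⟨-, -, i₁, -, him⟩ := hStar
  have : Nonempty I := ⟨i₁⟩
  have : Nonempty UnitVec := ⟨⟨1, norm_one⟩⟩
  obtain ⟨B, hB⟩ := M.exists_measure_norm_gt_eq_zero hη
  refine ⟨1 / 2, one_half_pos, (2 - α) / 4, by linarith, fun ξW hξW => ?_⟩
  filter_upwards [hdim] with ω hω
  have : IsProbabilityMeasure (η ω) := (hB ω).1
  have hbdd : ∀ n : ℕ, BddBelow (Set.range fun v : UnitVec =>
      ((ξW v.1) {u : ℂ | α - 1 + (2 - α) / 4 ≤ projHn (lineDir u) (η ω) n}).toReal) :=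
    fun n => ⟨0, by rintro _ ⟨v, rfl⟩; exact ENNReal.toReal_nonneg⟩
  have : IsProbabilityMeasure (ξW 1) := (hξW 1 norm_one).1
  refine le_liminf_of_le (isCoboundedUnder_ge_of_le atTop fun n =>
    (ciInf_le (hbdd n) ⟨1, norm_one⟩).trans measureReal_le_one) ?_
  filter_upwards [eventually_half_le_measureReal_projHn (hB ω).2 hω h1 (κ := (2 - α) / 4)
    (by linarith) (by linarith) (M.rotPt_ne_one him)] with n hn
  refine le_ciInf fun v => ?_
  obtain ⟨hξ, hinv, hfull⟩ := hξW v.1 v.2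
  exact hn (ξW v.1) (hinv i₁) _ (M.orbitClosure_subset_sphere v.2) hfull
end
end

section
/- Let Σ be a planar model. For any ε, C, ρ > 0 there exists N_ε = N(ε, C, ρ) ∈ ℕ such that the following holds: if ω ∈ Ω and k ∈ ℕ are such that η^{(T^{k'(ω)}ω)} is (C, ρ)-Frostman on tubes, and n = k'(ω) + N_ε, then P_{i=k}( d_TV( η^(ω)_{x,i}, η^(ω)_{n,[x,i]} ) < ε ) > 1 − ε. -/
open MeasureTheory Filter Set
open scoped ENNReal Topology Classical

noncomputable section

open SSmodel SSmodel.PlanarModel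

/-!
Decompose `η^(ω)` at level `n = k'(ω) + N` into the pieces `p_u · (f_u)_* η^(Tⁿω)`. A piece whose
ball `B_u` charges the cell `D = D_k(x)` without lying inside it sits within `3R|λ_u|` of the
boundary of `D`, so the truncated component differs from the raw one in total variation by at
most `η(D ∩ G) / η(D)`, where `G` is the `3R|λ_u|`-neighbourhood of the level-`k` grid lines.
Decomposing instead at level `k'(ω)`, every `f_v(B(0,R))` has diameter at most `2^{-k}`, so it
meets at most two grid lines of each direction; these pull back to tubes of width at most
`3R q^N` (`q = max rᵢ`), and the Frostman property of `η^(T^{k'}ω)` gives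
`η(G) ≤ 4C(3R q^N)^ρ`. Markov's inequality over the level-`k` cells then bounds the mass of the
cells where `η(D ∩ G) ≥ ε η(D)`.
-/

namespace SSmodel

/-! ### Cylinders in `∏ₘ Fin (κ m)` -/

section Cylinder

variable {κ : ℕ → ℕ}

def initCyl (n : ℕ) (u : ∀ j : Fin n, Fin (κ j)) : Set (∀ m, Fin (κ m)) :=
  {x | ∀ j : Fin n, x j = u j}

theorem measurableSet_initCyl (n : ℕ) (u : ∀ j : Fin n, Fin (κ j)) :
    MeasurableSet (initCyl n u) := by
  simp only [initCyl, Set.ofPred_forall]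
  exact .iInter fun j => (measurableSet_singleton (u j)).preimage (measurable_pi_apply (j : ℕ))

theorem preimage_eval_singleton_eq_iUnion_initCyl (m : ℕ) (t : Fin (κ m)) :
    (fun x : ∀ m, Fin (κ m) => x m) ⁻¹' {t} =
      ⋃ (u : ∀ j : Fin (m + 1), Fin (κ j)) (_ : u (Fin.last m) = t), initCyl (m + 1) u := by
  ext x
  simp only [Set.mem_preimage, Set.mem_singleton_iff, Set.mem_iUnion, initCyl, Set.mem_ofPred_eq]
  constructor
  · rintro rfl
    exact ⟨fun j => x j, rfl, fun j => rfl⟩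
  · rintro ⟨u, rfl, hx⟩
    exact hx (Fin.last m)

theorem pi_eq_generateFrom_initCyl :
    (MeasurableSpace.pi : MeasurableSpace (∀ m, Fin (κ m))) =
      MeasurableSpace.generateFrom {S | ∃ n u, S = initCyl (κ := κ) n u} := by
  refine le_antisymm (iSup_le fun m => measurable_iff_comap_le.mp ?_)
    (MeasurableSpace.generateFrom_le ?_)
  · refine @measurable_to_countable' _ _ _ _ (MeasurableSpace.generateFrom _) _ fun t => ?_
    rw [preimage_eval_singleton_eq_iUnion_initCyl]
    exact .iUnion fun u => .iUnion fun _ => .basic _ ⟨m + 1, u, rfl⟩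
  · rintro S ⟨n, u, rfl⟩
    exact measurableSet_initCyl n u

theorem initCyl_subset_initCyl {n n' : ℕ} (hle : n ≤ n') {u : ∀ j : Fin n, Fin (κ j)}
    {u' : ∀ j : Fin n', Fin (κ j)} (hne : (initCyl n u ∩ initCyl n' u').Nonempty) :
    initCyl n' u' ⊆ initCyl n u := by
  obtain ⟨x, hxu, hxu'⟩ := hne
  intro y hy j
  let j' : Fin n' := ⟨j, j.isLt.trans_le hle⟩
  rw [← hxu j, show x j = x j' from rfl, hxu' j', ← hy j']

theorem isPiSystem_initCyl : IsPiSystem {S | ∃ n u, S = initCyl (κ := κ) n u} := by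
  rintro S ⟨n, u, rfl⟩ T ⟨n', u', rfl⟩ hne
  rcases le_total n n' with h | h
  · exact ⟨n', u', Set.inter_eq_right.mpr (initCyl_subset_initCyl h hne)⟩
  · exact ⟨n, u, Set.inter_eq_left.mpr (initCyl_subset_initCyl h (Set.inter_comm _ _ ▸ hne))⟩

theorem ext_of_initCyl {μ ν : Measure (∀ m, Fin (κ m))} [IsFiniteMeasure μ]
    (h : ∀ n u, μ (initCyl n u) = ν (initCyl n u)) : μ = ν := by
  refine ext_of_generate_finite _ pi_eq_generateFrom_initCyl isPiSystem_initCyl ?_ ?_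
  · rintro S ⟨n, u, rfl⟩
    exact h n u
  · simpa [initCyl] using h 0 finZeroElim

theorem sum_restrict_initCyl (μ : Measure (∀ m, Fin (κ m))) (n : ℕ) :
    Measure.sum (fun u : ∀ j : Fin n, Fin (κ j) => μ.restrict (initCyl n u)) = μ := by
  have hcover : (⋃ u, initCyl (κ := κ) n u) = Set.univ :=
    Set.iUnion_eq_univ_iff.mpr fun x => ⟨fun j => x j, fun j => rfl⟩
  rw [← Measure.restrict_iUnion (fun u u' huu' => Set.disjoint_left.mpr fun x hx hx' =>
    huu' (funext fun j => (hx j).symm.trans (hx' j))) (measurableSet_initCyl n), hcover,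
    Measure.restrict_univ]

theorem val_apply_congr {α : Type*} {g : α → ℕ} (w : ∀ a, Fin (g a)) {a b : α} (h : a = b) :
    (w a : ℕ) = w b := by
  subst h; rfl

theorem apply_congr_of_val_eq {β : Type*} {g : ℕ → ℕ} (f : ∀ a, Fin (g a) → β) {a b : ℕ}
    (h : a = b) (s : Fin (g a)) (t : Fin (g b)) (hst : (s : ℕ) = t) : f a s = f b t := by
  subst h; rw [Fin.ext hst]

def wordAppend {n m : ℕ} (u : ∀ j : Fin n, Fin (κ j)) (v : ∀ j : Fin m, Fin (κ (j + n)))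
    (j : Fin (n + m)) : Fin (κ j) :=
  if h : (j : ℕ) < n then u ⟨j, h⟩
  else Fin.cast (congrArg κ (Nat.sub_add_cancel (not_lt.mp h))) (v ⟨j - n, by omega⟩)

variable {n m : ℕ} (u : ∀ j : Fin n, Fin (κ j)) (v : ∀ j : Fin m, Fin (κ (j + n)))

@[simp]
theorem wordAppend_castAdd (j : Fin n) : wordAppend u v (Fin.castAdd m j) = u j :=
  dif_pos j.isLt

theorem val_wordAppend_natAdd (i : Fin m) : (wordAppend u v (Fin.natAdd n i) : ℕ) = v i := by
  rw [wordAppend, dif_neg (by simp), Fin.val_cast]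
  exact val_apply_congr v (Fin.ext (by simp))

theorem initCyl_wordAppend :
    initCyl (n + m) (wordAppend u v) =
      (fun (x : ∀ a, Fin (κ a)) (a : ℕ) => x (a + n)) ⁻¹' initCyl m v ∩ initCyl n u := by
  ext x
  simp only [initCyl, Set.mem_inter_iff, Set.mem_preimage, Set.mem_ofPred_eq]
  constructor
  · intro hx
    refine ⟨fun i => Fin.ext ?_, fun j => by simpa using hx (Fin.castAdd m j)⟩
    rw [val_apply_congr x (Nat.add_comm (i : ℕ) n), ← val_wordAppend_natAdd u v i]
    exact congrArg Fin.val (hx (Fin.natAdd n i))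
  · rintro ⟨hv, hu⟩ j
    refine Fin.addCases (fun j => by simpa using hu j) (fun i => Fin.ext ?_) j
    rw [val_wordAppend_natAdd, ← congrArg Fin.val (hv i)]
    exact val_apply_congr x (Nat.add_comm n i)

theorem prod_wordAppend {β : Type*} [CommMonoid β] (f : ∀ a, Fin (κ a) → β) :
    ∏ j : Fin (n + m), f j (wordAppend u v j) =
      (∏ j : Fin n, f j (u j)) * ∏ i : Fin m, f (i + n) (v i) := by
  rw [Fin.prod_univ_add]
  congr 1
  · simp
  · exact Finset.prod_congr rfl fun i _ =>
      apply_congr_of_val_eq f (Nat.add_comm n i) _ _ (val_wordAppend_natAdd u v i)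

end Cylinder

/-! ### Dyadic cells and the neighbourhood of the dyadic grid -/

theorem mem_cell2_iff {n : ℕ} {a : ℤ × ℤ} {z : ℂ} :
    z ∈ cell2 n a ↔ z.re ∈ cell1 n a.1 ∧ z.im ∈ cell1 n a.2 := by
  simp only [cell2, cell1, Set.mem_ofPred_eq, and_assoc]

theorem measurableSet_cell2 (n : ℕ) (a : ℤ × ℤ) : MeasurableSet (cell2 n a) := by
  simp only [cell2, Set.ofPred_and]
  refine .inter ?_ (.inter ?_ (.inter ?_ ?_))
  all_goals first
    | exact measurableSet_le (by fun_prop) (by fun_prop)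
    | exact measurableSet_lt (by fun_prop) (by fun_prop)

theorem measurableSet_dyadicCellOf (n : ℕ) (x : ℂ) : MeasurableSet (dyadicCellOf n x) :=
  measurableSet_cell2 n _

theorem mem_cell2_cellIdx (n : ℕ) (x : ℂ) : x ∈ cell2 n (cellIdx n x) :=
  ⟨Int.floor_le _, Int.lt_floor_add_one _, Int.floor_le _, Int.lt_floor_add_one _⟩

theorem cellIdx_eq_of_mem {n : ℕ} {x : ℂ} {a : ℤ × ℤ} (h : x ∈ cell2 n a) : cellIdx n x = a :=
  Prod.ext (Int.floor_eq_iff.mpr ⟨h.1, h.2.1⟩) (Int.floor_eq_iff.mpr ⟨h.2.2.1, h.2.2.2⟩)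

theorem setOf_cellIdx_mem (n : ℕ) (S : Set (ℤ × ℤ)) :
    {x | cellIdx n x ∈ S} = ⋃ a ∈ S, cell2 n a := by
  ext x
  simp only [Set.mem_ofPred_eq, Set.mem_iUnion, exists_prop]
  exact ⟨fun hx => ⟨_, hx, mem_cell2_cellIdx n x⟩, fun ⟨a, ha, hx⟩ => cellIdx_eq_of_mem hx ▸ ha⟩

theorem pairwise_disjoint_cell2 (n : ℕ) : Pairwise (Function.onFun Disjoint (cell2 n)) :=
  fun _ _ hab => Set.disjoint_left.mpr fun _ ha hb =>
    hab ((cellIdx_eq_of_mem ha).symm.trans (cellIdx_eq_of_mem hb))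

def gridNhd (n : ℕ) (r : ℝ) : Set ℂ :=
  {z | ∃ m : ℤ, |z.re - m / 2 ^ n| < r ∨ |z.im - m / 2 ^ n| < r}

theorem measurableSet_gridNhd (n : ℕ) (r : ℝ) : MeasurableSet (gridNhd n r) := by
  simp only [gridNhd, Set.ofPred_exists, Set.ofPred_or]
  exact .iUnion fun m => .union (measurableSet_lt (by fun_prop) (by fun_prop))
    (measurableSet_lt (by fun_prop) (by fun_prop))

theorem exists_abs_sub_lt_of_mem_cell1 {n : ℕ} {a : ℤ} {x y r : ℝ} (hx : x ∈ cell1 n a)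
    (hy : y ∉ cell1 n a) (hxy : |x - y| < r) : ∃ m : ℤ, |x - m / 2 ^ n| < r := by
  have hs : (0 : ℝ) < 2 ^ n := by positivity
  obtain ⟨hxa, hxa'⟩ := hx
  have := abs_lt.mp hxy
  by_cases hya : (a : ℝ) ≤ 2 ^ n * y
  · have hya' : (a : ℝ) + 1 ≤ 2 ^ n * y := not_lt.mp fun h => hy ⟨hya, h⟩
    refine ⟨a + 1, abs_lt.mpr ⟨?_, ?_⟩⟩
    · have : ((a + 1 : ℤ) : ℝ) / 2 ^ n ≤ y := by
        rw [div_le_iff₀ hs]; push_cast; linarith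
      linarith
    · have : x < ((a + 1 : ℤ) : ℝ) / 2 ^ n := by
        rw [lt_div_iff₀ hs]; push_cast; linarith
      linarith
  · have h₁ : y < (a : ℝ) / 2 ^ n := by rw [lt_div_iff₀ hs]; linarith
    have h₂ : (a : ℝ) / 2 ^ n ≤ x := by rw [div_le_iff₀ hs]; linarith
    exact ⟨a, abs_lt.mpr ⟨by linarith, by linarith⟩⟩

theorem mem_gridNhd_of_mem_cell2 {n : ℕ} {a : ℤ × ℤ} {z q : ℂ} {r : ℝ} (hz : z ∈ cell2 n a)
    (hq : q ∉ cell2 n a) (hzq : ‖z - q‖ < r) : z ∈ gridNhd n r := by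
  rw [mem_cell2_iff] at hz hq
  rw [not_and_or] at hq
  rcases hq with hq | hq
  · obtain ⟨m, hm⟩ := exists_abs_sub_lt_of_mem_cell1 hz.1 hq
      ((Complex.abs_re_le_norm (z - q)).trans_lt hzq)
    exact ⟨m, .inl hm⟩
  · obtain ⟨m, hm⟩ := exists_abs_sub_lt_of_mem_cell1 hz.2 hq
      ((Complex.abs_im_le_norm (z - q)).trans_lt hzq)
    exact ⟨m, .inr hm⟩

theorem eq_floor_or_eq_floor_add_one {m : ℤ} {u : ℝ} (h : |(m : ℝ) - u| < 1) :
    m = ⌊u⌋ ∨ m = ⌊u⌋ + 1 := by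
  obtain ⟨h₁, h₂⟩ := abs_lt.mp h
  have : m < ⌊u⌋ + 2 := by
    have := Int.lt_floor_add_one u
    exact_mod_cast (show (m : ℝ) < ⌊u⌋ + 2 by linarith)
  have : ⌊u⌋ - 1 < m := by
    have := Int.floor_le u
    exact_mod_cast (show (⌊u⌋ : ℝ) - 1 < m by linarith)
  omega

theorem eq_floor_or_of_abs_sub_lt {n : ℕ} {m : ℤ} {x c r r' : ℝ} (hm : |x - m / 2 ^ n| < r)
    (hc : |x - c| ≤ r') (hrr : r + r' ≤ 1 / 2 ^ n) :
    m = ⌊2 ^ n * c⌋ ∨ m = ⌊2 ^ n * c⌋ + 1 := by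
  have hs : (0 : ℝ) < 2 ^ n := by positivity
  refine eq_floor_or_eq_floor_add_one ?_
  have hlt : |(m : ℝ) / 2 ^ n - c| < 1 / 2 ^ n :=
    calc |(m : ℝ) / 2 ^ n - c| ≤ |x - m / 2 ^ n| + |x - c| := by
          rw [abs_sub_comm x]; exact abs_sub_le _ _ _
      _ < 1 / 2 ^ n := by linarith
  rw [show (m : ℝ) - 2 ^ n * c = 2 ^ n * ((m : ℝ) / 2 ^ n - c) by field_simp, abs_mul,
    abs_of_pos hs]
  rwa [lt_div_iff₀ hs, mul_comm] at hlt

/-! ### Tubes -/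

open ComplexConjugate

/-- `FrostmanOnTubes μ C ρ` says `μ (tube w x r) ≤ ENNReal.ofReal (C * r ^ ρ)` for unit `w`. -/
def tube (w x : ℂ) (r : ℝ) : Set ℂ := {z | |((z - x) * conj w).im| < r}

theorem mem_tube_I {z : ℂ} {c r : ℝ} : z ∈ tube Complex.I c r ↔ |z.re - c| < r := by
  simp [tube, abs_sub_comm]

theorem mem_tube_one {z : ℂ} {c r : ℝ} : z ∈ tube 1 (c * Complex.I) r ↔ |z.im - c| < r := by
  simp [tube]

theorem preimage_affine_tube {P : ℂ} (hP : P ≠ 0) (t w x : ℂ) (r : ℝ) :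
    (fun z => P * z + t) ⁻¹' tube w x r =
      tube (conj P * w / ‖P‖) ((x - t) / P) (r / ‖P‖) := by
  have hP' : (0 : ℝ) < ‖P‖ := norm_pos_iff.mpr hP
  ext z
  have key : (z - (x - t) / P) * conj (conj P * w / ‖P‖) = (P * z + t - x) * conj w / ‖P‖ := by
    simp only [map_div₀, map_mul, Complex.conj_conj, Complex.conj_ofReal]
    field_simp
    ring
  simp only [tube, Set.mem_preimage, Set.mem_ofPred_eq, key, Complex.div_ofReal_im, abs_div,
    abs_of_pos hP', div_lt_div_iff_of_pos_right hP']

theorem FrostmanOnTubes.measure_preimage_affine_tube_le {μ : Measure ℂ} {C ρ : ℝ}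
    (hF : FrostmanOnTubes μ C ρ) {P : ℂ} (hP : P ≠ 0) (t : ℂ) {w : ℂ} (hw : ‖w‖ = 1) (x : ℂ)
    {r : ℝ} (hr : 0 < r) :
    μ ((fun z => P * z + t) ⁻¹' tube w x r) ≤ ENNReal.ofReal (C * (r / ‖P‖) ^ ρ) := by
  have hP' : (0 : ℝ) < ‖P‖ := norm_pos_iff.mpr hP
  rw [preimage_affine_tube hP]
  refine hF _ ?_ _ _ (div_pos hr hP')
  rw [norm_div, norm_mul, Complex.norm_conj, hw, mul_one, Complex.norm_real, Real.norm_eq_abs,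
    abs_of_pos hP', div_self hP'.ne']

open Complex in
theorem FrostmanOnTubes.measure_preimage_gridNhd_le {ν : Measure ℂ} {C ρ R : ℝ}
    (hF : FrostmanOnTubes ν C ρ) (hν : ∀ᵐ z ∂ν, ‖z‖ ≤ R) {P : ℂ} (hP : P ≠ 0) (t : ℂ)
    {n : ℕ} {r : ℝ} (hr : 0 < r) (hrR : r + ‖P‖ * R ≤ 1 / 2 ^ n) :
    ν ((fun z => P * z + t) ⁻¹' gridNhd n r) ≤ 4 * ENNReal.ofReal (C * (r / ‖P‖) ^ ρ) := by
  set g := fun z => P * z + t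
  set a : ℤ := ⌊2 ^ n * t.re⌋
  set b : ℤ := ⌊2 ^ n * t.im⌋
  set T₁ := tube I ((a / 2 ^ n : ℝ) : ℂ) r
  set T₂ := tube I (((a + 1 : ℤ) / 2 ^ n : ℝ) : ℂ) r
  set T₃ := tube 1 ((b / 2 ^ n : ℝ) * I) r
  set T₄ := tube 1 (((b + 1 : ℤ) / 2 ^ n : ℝ) * I) r
  -- `g (closedBall 0 R)` is too small to meet more than two grid lines in each direction
  have hcover : ∀ᵐ y ∂ν, g y ∈ gridNhd n r → g y ∈ T₁ ∪ T₂ ∪ T₃ ∪ T₄ := by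
    filter_upwards [hν] with y hy ⟨m, hm⟩
    have hyt : ‖g y - t‖ ≤ ‖P‖ * R := by
      simpa [g, norm_mul] using mul_le_mul_of_nonneg_left hy (norm_nonneg P)
    simp only [T₁, T₂, T₃, T₄, Set.mem_union, mem_tube_I, mem_tube_one]
    rcases hm with hm | hm
    · rcases eq_floor_or_of_abs_sub_lt hm ((abs_re_le_norm _).trans (by simpa using hyt)) hrR
        with rfl | rfl
      · exact .inl (.inl (.inl hm))
      · exact .inl (.inl (.inr hm))
    · rcases eq_floor_or_of_abs_sub_lt hm ((abs_im_le_norm _).trans (by simpa using hyt)) hrR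
        with rfl | rfl
      · exact .inl (.inr hm)
      · exact .inr hm
  have htube : ∀ (w x : ℂ), ‖w‖ = 1 → ν (g ⁻¹' tube w x r) ≤ ENNReal.ofReal (C * (r / ‖P‖) ^ ρ) :=
    fun w x hw => hF.measure_preimage_affine_tube_le hP t hw x hr
  calc ν (g ⁻¹' gridNhd n r)
      ≤ ν (g ⁻¹' T₁ ∪ g ⁻¹' T₂ ∪ g ⁻¹' T₃ ∪ g ⁻¹' T₄) := measure_mono_ae hcover
    _ ≤ ν (g ⁻¹' T₁) + ν (g ⁻¹' T₂) + ν (g ⁻¹' T₃) + ν (g ⁻¹' T₄) := by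
        refine (measure_union_le _ _).trans (add_le_add_left ?_ _)
        refine (measure_union_le _ _).trans (add_le_add_left ?_ _)
        exact measure_union_le _ _
    _ ≤ 4 * ENNReal.ofReal (C * (r / ‖P‖) ^ ρ) := by
        rw [show (4 : ℝ≥0∞) = 1 + 1 + 1 + 1 by norm_num]
        simp only [add_mul, one_mul]
        gcongr <;> exact htube _ _ (by simp)

theorem measure_preimage_le_inter_of_mapsTo {ν : Measure ℂ} {R : ℝ} (hν : ∀ᵐ z ∂ν, ‖z‖ ≤ R)
    {g : ℂ → ℂ} {D : Set ℂ} (hgD : ∀ z : ℂ, ‖z‖ ≤ R → g z ∈ D) (s : Set ℂ) :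
    ν (g ⁻¹' s) ≤ ν (g ⁻¹' (s ∩ D)) :=
  measure_mono_ae <| by
    filter_upwards [hν] with y hy hys using ⟨hys, hgD y hy⟩

theorem measure_preimage_cell2_le_inter_gridNhd {ν : Measure ℂ} {R : ℝ}
    (hν : ∀ᵐ z ∂ν, ‖z‖ ≤ R) (hR : 0 < R) {P : ℂ} (hP : P ≠ 0) (t : ℂ) {n : ℕ} {a : ℤ × ℤ}
    (hout : ¬ ∀ z : ℂ, ‖z‖ ≤ R → P * z + t ∈ cell2 n a) :
    ν ((fun z => P * z + t) ⁻¹' cell2 n a) ≤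
      ν ((fun z => P * z + t) ⁻¹' (cell2 n a ∩ gridNhd n (3 * R * ‖P‖))) := by
  push Not at hout
  obtain ⟨z₀, hz₀, hz₀a⟩ := hout
  refine measure_mono_ae ?_
  filter_upwards [hν] with y hy hya
  refine ⟨hya, mem_gridNhd_of_mem_cell2 hya hz₀a ?_⟩
  calc ‖P * y + t - (P * z₀ + t)‖ = ‖P‖ * ‖y - z₀‖ := by rw [← norm_mul]; ring_nf
    _ ≤ ‖P‖ * (2 * R) := by gcongr; linarith [norm_sub_le y z₀]
    _ < 3 * R * ‖P‖ := by nlinarith [norm_pos_iff.mpr hP]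

theorem abs_div_sub_div_le {A B M T : ℝ} (hB : 0 < B) (hBA : B ≤ A) (hT : 0 ≤ T) (hTB : T ≤ B)
    (hTM : T ≤ M) (hMT : M - T ≤ A - B) : |M / A - T / B| ≤ 1 - B / A := by
  have hA : 0 < A := hB.trans_le hBA
  rw [abs_sub_le_iff]
  constructor
  · calc M / A - T / B ≤ (T + (A - B)) / A - T / A := by
          gcongr
          linarith
      _ = 1 - B / A := by field_simp; ring
  · calc T / B - M / A ≤ T / B - T / A := by gcongr
      _ = T / B * (1 - B / A) := by field_simp
      _ ≤ 1 - B / A := mul_le_of_le_one_left (by rw [sub_nonneg, div_le_one hA]; exact hBA)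
          ((div_le_one hB).mpr hTB)

theorem dTV_inv_smul_le_of_le {μ ν : Measure ℂ} [IsFiniteMeasure μ] (hνμ : ν ≤ μ)
    (hν : ν Set.univ ≠ 0) :
    dTV ((μ Set.univ)⁻¹ • μ) ((ν Set.univ)⁻¹ • ν) ≤
      1 - (ν Set.univ).toReal / (μ Set.univ).toReal := by
  have := isFiniteMeasure_of_le μ hνμ
  have : Nonempty {s : Set ℂ // MeasurableSet s} := ⟨⟨∅, .empty⟩⟩
  refine ciSup_le fun ⟨s, hs⟩ => ?_
  simp only [Measure.smul_apply, smul_eq_mul, ENNReal.toReal_mul, ENNReal.toReal_inv,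
    ← div_eq_inv_mul]
  have hμs := measureReal_add_measureReal_compl (μ := μ) hs
  have hνs := measureReal_add_measureReal_compl (μ := ν) hs
  have hle : ∀ t, ν t ≤ μ t := Measure.le_iff'.mp hνμ
  have hcompl := ENNReal.toReal_mono (measure_ne_top _ _) (hle sᶜ)
  simp only [measureReal_def] at hμs hνs
  refine abs_div_sub_div_le (ENNReal.toReal_pos hν (measure_ne_top _ _))
    (ENNReal.toReal_mono (measure_ne_top _ _) (hle _)) ENNReal.toReal_nonneg
    (ENNReal.toReal_mono (measure_ne_top _ _) (measure_mono (Set.subset_univ s)))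
    (ENNReal.toReal_mono (measure_ne_top _ _) (hle _)) ?_
  linarith

theorem one_sub_toReal_div_lt {A B E : ℝ≥0∞} {ε : ℝ} (hA : A ≠ ⊤) (hBA : B ≤ A)
    (hABE : A ≤ B + E) (hE : E < ENNReal.ofReal ε * A) : 1 - B.toReal / A.toReal < ε := by
  have hε : 0 ≤ ε := by
    by_contra h
    simp [ENNReal.ofReal_of_nonpos (not_le.mp h).le] at hE
  have hB : B ≠ ⊤ := ne_top_of_le_ne_top hA hBA
  have hA₀ : 0 < A.toReal := ENNReal.toReal_pos (by rintro rfl; simp at hE) hA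
  have hABE' : A.toReal ≤ B.toReal + E.toReal := by
    rw [← ENNReal.toReal_add hB hE.ne_top]
    exact ENNReal.toReal_mono (ENNReal.add_ne_top.mpr ⟨hB, hE.ne_top⟩) hABE
  have hE' : E.toReal < ε * A.toReal := by
    simpa [ENNReal.toReal_mul, ENNReal.toReal_ofReal hε] using
      ENNReal.toReal_strict_mono (ENNReal.mul_ne_top ENNReal.ofReal_ne_top hA) hE
  rw [sub_lt_comm, lt_div_iff₀ hA₀]
  linarith

theorem measure_setOf_mul_measure_dyadicCellOf_le (μ : Measure ℂ) (k : ℕ) {G : Set ℂ}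
    (hG : MeasurableSet G) {c : ℝ≥0∞} (hc : c ≠ 0) (hc' : c ≠ ⊤) :
    μ {x | c * μ (dyadicCellOf k x) ≤ μ (dyadicCellOf k x ∩ G)} ≤ μ G / c := by
  set S := {a : ℤ × ℤ | c * μ (cell2 k a) ≤ μ (cell2 k a ∩ G)}
  rw [show {x | c * μ (dyadicCellOf k x) ≤ μ (dyadicCellOf k x ∩ G)} = ⋃ a ∈ S, cell2 k a from
    setOf_cellIdx_mem k S]
  calc μ (⋃ a ∈ S, cell2 k a) ≤ ∑' a : S, μ (cell2 k a) := measure_biUnion_le _ S.to_countable _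
    _ ≤ ∑' a : S, μ (cell2 k a ∩ G) / c := ENNReal.tsum_le_tsum fun a =>
        (ENNReal.le_div_iff_mul_le (.inl hc) (.inl hc')).mpr (mul_comm c _ ▸ a.2)
    _ = μ (⋃ a ∈ S, cell2 k a ∩ G) / c := by
        simp only [div_eq_mul_inv]
        rw [ENNReal.tsum_mul_right, measure_biUnion S.to_countable
          (fun a _ b _ hab => ((pairwise_disjoint_cell2 k hab).mono Set.inter_subset_left
            Set.inter_subset_left))
          fun a _ => (measurableSet_cell2 k a).inter hG]
    _ ≤ μ G / c := by
        gcongr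
        exact Set.iUnion₂_subset fun a _ => Set.inter_subset_right

theorem one_sub_lt_toReal_of_measure_compl_lt {α : Type*} [MeasurableSpace α] {μ : Measure α}
    [IsProbabilityMeasure μ] {s : Set α} {ε : ℝ} (h : μ sᶜ < ENNReal.ofReal ε) :
    1 - ε < (μ s).toReal := by
  have h₁ : (1 : ℝ≥0∞) ≤ μ s + μ sᶜ := measure_univ (μ := μ) ▸ measure_univ_le_add_compl s
  have h₂ : 1 ≤ (μ s).toReal + (μ sᶜ).toReal := by
    rw [← ENNReal.toReal_add (measure_ne_top _ _) (measure_ne_top _ _)]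
    exact ENNReal.toReal_one ▸ ENNReal.toReal_mono (by finiteness) h₁
  linarith [ENNReal.toReal_lt_of_lt_ofReal h]

theorem exists_three_mul_pow_le_one_and_lt {q : ℝ} (hq0 : 0 ≤ q) (hq1 : q < 1) (C R : ℝ)
    {ρ δ : ℝ} (hρ : 0 < ρ) (hδ : 0 < δ) :
    ∃ N : ℕ, 3 * q ^ N ≤ 1 ∧ 4 * (C * (3 * R * q ^ N) ^ ρ) < δ := by
  have hpow := tendsto_pow_atTop_nhds_zero_of_lt_one hq0 hq1
  have h₁ : ∀ᶠ N : ℕ in atTop, 3 * q ^ N < 1 :=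
    (by simpa using hpow.const_mul 3 : Tendsto (fun N : ℕ => 3 * q ^ N) atTop (𝓝 0))
      |>.eventually_lt_const one_pos
  have h₂ : Tendsto (fun N : ℕ => 4 * (C * (3 * R * q ^ N) ^ ρ)) atTop (𝓝 0) := by
    simpa [Real.zero_rpow hρ.ne'] using
      (((hpow.const_mul (3 * R)).rpow_const (.inr hρ.le)).const_mul C).const_mul 4
  obtain ⟨N, hN₁, hN₂⟩ := (h₁.and (h₂.eventually_lt_const hδ)).exists
  exact ⟨N, hN₁.le, hN₂⟩

/-! ### The coding map and the self-similarity of `η` -/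

namespace PlanarModel

variable {I : Type} [Fintype I] [MeasurableSpace I] {M : PlanarModel I} {R : ℝ}
  {η : (ℕ → I) → Measure ℂ}

theorem exists_norm_lam_le (M : PlanarModel I) :
    ∃ q : ℝ, 0 ≤ q ∧ q < 1 ∧ ∀ i, ‖M.lam i‖ ≤ q := by
  refine ⟨(Finset.univ.sup (fun i => ‖M.lam i‖₊) : NNReal), NNReal.coe_nonneg _, ?_, fun i => ?_⟩
  · exact NNReal.coe_lt_one.mpr
      ((Finset.sup_lt_iff zero_lt_one).mpr fun i _ => by exact_mod_cast M.lam_lt i)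
  · exact NNReal.coe_le_coe.mpr (Finset.le_sup (f := fun i => ‖M.lam i‖₊) (Finset.mem_univ i))

theorem prod_norm_lam_le {q : ℝ} (hq : ∀ i, ‖M.lam i‖ ≤ q) (ω : ℕ → I) (n : ℕ) :
    ∏ j ∈ Finset.range n, ‖M.lam (ω j)‖ ≤ q ^ n := by
  simpa using Finset.prod_le_prod (s := Finset.range n) (fun j _ => norm_nonneg _)
    fun j _ => hq (ω j)

theorem lamProd_ne_zero (ω : ℕ → I) (n : ℕ) : M.lamProd ω n ≠ 0 :=
  Finset.prod_ne_zero_iff.mpr fun i _ => M.lam_ne (ω i)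

theorem norm_lamProd_add_le {q : ℝ} (hq : ∀ i, ‖M.lam i‖ ≤ q) (ω : ℕ → I) (k N : ℕ) :
    ‖M.lamProd ω (k + N)‖ ≤ ‖M.lamProd ω k‖ * q ^ N := by
  rw [lamProd, lamProd, norm_prod, norm_prod, Finset.prod_range_add]
  exact mul_le_mul_of_nonneg_left (prod_norm_lam_le hq _ N)
    (Finset.prod_nonneg fun _ _ => norm_nonneg _)

theorem IsNPrime.norm_lamProd_mul_le {np : (ℕ → I) → ℕ → ℕ} (hnp : M.IsNPrime R np)
    (ω : ℕ → I) (k : ℕ) : ‖M.lamProd ω (np ω k)‖ * R ≤ 1 / 2 ^ k / 2 := by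
  have h := (hnp ω k).1
  rw [zpow_neg, zpow_natCast, ← one_div] at h
  rw [lamProd, norm_prod]
  linarith

theorem summable_codingMap (M : PlanarModel I) (ω : ℕ → I) (x : ∀ n, Fin (M.k (ω n))) :
    Summable fun n => (∏ j ∈ Finset.range n, M.lam (ω j)) * M.tr (ω n) (x n) := by
  obtain ⟨q, hq0, hq1, hq⟩ := M.exists_norm_lam_le
  obtain ⟨T, hT⟩ := (Set.finite_range fun s : Σ i, Fin (M.k i) => ‖M.tr s.1 s.2‖).bddAbove
  refine .of_norm_bounded ((summable_geometric_of_lt_one hq0 hq1).mul_right T) fun n => ?_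
  rw [norm_mul, norm_prod]
  exact mul_le_mul (prod_norm_lam_le hq ω n) (hT ⟨⟨ω n, x n⟩, rfl⟩) (norm_nonneg _)
    (pow_nonneg hq0 n)

theorem norm_partialCode_le (hR : M.GoodRadius R) (ω : ℕ → I) (x : ∀ n, Fin (M.k (ω n)))
    (n : ℕ) {z : ℂ} (hz : ‖z‖ ≤ R) :
    ‖(∏ j ∈ Finset.range n, M.lam (ω j)) * z +
      ∑ m ∈ Finset.range n, (∏ j ∈ Finset.range m, M.lam (ω j)) * M.tr (ω m) (x m)‖ ≤ R := by
  induction n generalizing z with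
  | zero => simpa using hz
  | succ n ih =>
    convert ih (hR.2.1 (ω n) (x n) z hz).le using 2
    rw [Finset.prod_range_succ, Finset.sum_range_succ]
    ring

theorem norm_codingMap_le (hR : M.GoodRadius R) (ω : ℕ → I) (x : ∀ n, Fin (M.k (ω n))) :
    ‖M.codingMap ω x‖ ≤ R :=
  le_of_tendsto ((M.summable_codingMap ω x).hasSum.tendsto_sum_nat.norm) <|
    .of_forall fun n => by
      simpa using norm_partialCode_le hR ω x n (z := 0) (by simpa using hR.1.le)

theorem measurable_codingMap (M : PlanarModel I) (ω : ℕ → I) : Measurable (M.codingMap ω) := by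
  refine measurable_of_tendsto_metrizable' (f := fun n x =>
    ∑ m ∈ Finset.range n, (∏ j ∈ Finset.range m, M.lam (ω j)) * M.tr (ω m) (x m)) atTop
    (fun n => Finset.measurable_sum _ fun m _ => ?_) ?_
  · exact ((measurable_of_countable _).comp (measurable_pi_apply m)).const_mul _
  · exact tendsto_pi_nhds.mpr fun x => (M.summable_codingMap ω x).hasSum.tendsto_sum_nat

theorem measurable_shift (M : PlanarModel I) (ω : ℕ → I) (n : ℕ) :
    Measurable (β := ∀ m, Fin (M.k (shiftN n ω m)))
      fun (x : ∀ m, Fin (M.k (ω m))) (m : ℕ) => x (m + n) :=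
  measurable_pi_lambda _ fun m => measurable_pi_apply (m + n)

theorem IsCodingFamily.isProbabilityMeasure (hη : M.IsCodingFamily η) (ω : ℕ → I) :
    IsProbabilityMeasure (η ω) := by
  obtain ⟨μ, ⟨hμ, -⟩, hmap⟩ := hη ω
  rw [hmap]
  exact Measure.isProbabilityMeasure_map (M.measurable_codingMap ω).aemeasurable

theorem IsCodingFamily.ae_norm_le (hη : M.IsCodingFamily η) (hR : M.GoodRadius R)
    (ω : ℕ → I) : ∀ᵐ z ∂η ω, ‖z‖ ≤ R := by
  obtain ⟨μ, -, hmap⟩ := hη ω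
  rw [hmap, ae_map_iff (M.measurable_codingMap ω).aemeasurable
    (measurableSet_le measurable_norm measurable_const)]
  exact .of_forall (norm_codingMap_le hR ω)

theorem codingMap_eq_of_mem_initCyl (ω : ℕ → I) {n : ℕ} {u : ∀ j : Fin n, Fin (M.k (ω j))}
    {x : ∀ m, Fin (M.k (ω m))} (hx : x ∈ initCyl n u) :
    M.codingMap ω x =
      M.lamProd ω n * M.codingMap (shiftN n ω) (fun m => x (m + n)) + M.finCode ω n u := by
  rw [codingMap, ← (M.summable_codingMap ω x).sum_add_tsum_nat_add n, add_comm]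
  congr 1
  · refine (tsum_congr fun m => ?_).trans tsum_mul_left
    rw [lamProd, ← mul_assoc, show Finset.range (m + n) = Finset.range (n + m) by rw [add_comm],
      Finset.prod_range_add]
    congr 2
    exact Finset.prod_congr rfl fun j _ => by rw [shiftN, add_comm]
  · rw [finCode, ← Fin.sum_univ_eq_sum_range]
    exact Finset.sum_congr rfl fun j _ => by rw [hx j]

theorem IsProductMeasure.map_restrict_initCyl {ω : ℕ → I} {n : ℕ}
    {μ : Measure (∀ m, Fin (M.k (ω m)))} {μ' : Measure (∀ m, Fin (M.k (shiftN n ω m)))}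
    (hμ : M.IsProductMeasure ω μ) (hμ' : M.IsProductMeasure (shiftN n ω) μ')
    (u : ∀ j : Fin n, Fin (M.k (ω j))) :
    ((μ.restrict (initCyl n u)).map (fun x m => x (m + n)) :
        Measure (∀ m, Fin (M.k (shiftN n ω m)))) =
      (∏ j : Fin n, ENNReal.ofReal (M.p (ω j) (u j))) • μ' := by
  have := hμ.1
  refine @ext_of_initCyl (fun m => M.k (shiftN n ω m)) _ _ (Measure.isFiniteMeasure_map _ _)
    fun m v => ?_
  rw [Measure.smul_apply, smul_eq_mul,
    Measure.map_apply (M.measurable_shift ω n) (measurableSet_initCyl m v),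
    Measure.restrict_apply (M.measurable_shift ω n (measurableSet_initCyl m v))]
  erw [← initCyl_wordAppend (κ := fun m => M.k (ω m)) u v, hμ.2, hμ'.2]
  exact prod_wordAppend u v fun a t => ENNReal.ofReal (M.p (ω a) t)

theorem IsCodingFamily.eq_sum_map (hη : M.IsCodingFamily η) (ω : ℕ → I) (n : ℕ) :
    η ω = ∑ u : ∀ j : Fin n, Fin (M.k (ω j)),
      ENNReal.ofReal (∏ j : Fin n, M.p (ω j) (u j)) •
        (η (shiftN n ω)).map (fun z => M.lamProd ω n * z + M.finCode ω n u) := by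
  obtain ⟨μ, hμ, hmap⟩ := hη ω
  obtain ⟨μ', hμ', hmap'⟩ := hη (shiftN n ω)
  rw [hmap, ← sum_restrict_initCyl μ n, Measure.map_sum (M.measurable_codingMap ω).aemeasurable,
    Measure.sum_fintype]
  refine Finset.sum_congr rfl fun u _ => ?_
  have haff : Measurable fun z => M.lamProd ω n * z + M.finCode ω n u := by fun_prop
  calc (μ.restrict (initCyl n u)).map (M.codingMap ω)
      = (μ.restrict (initCyl n u)).map ((fun z => M.lamProd ω n * z + M.finCode ω n u) ∘
          M.codingMap (shiftN n ω) ∘ fun x m => x (m + n)) :=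
        Measure.map_congr (ae_restrict_of_forall_mem
          (measurableSet_initCyl (κ := fun m => M.k (ω m)) n u)
          fun x hx => codingMap_eq_of_mem_initCyl (M := M) ω hx)
    _ = (((μ.restrict (initCyl n u)).map fun x m => x (m + n)).map
          (M.codingMap (shiftN n ω))).map (fun z => M.lamProd ω n * z + M.finCode ω n u) := by
        rw [Measure.map_map haff (M.measurable_codingMap _)]
        exact (Measure.map_map (haff.comp (M.measurable_codingMap _))
          (M.measurable_shift ω n)).symm
    _ = _ := by
        rw [hμ.map_restrict_initCyl hμ' u, Measure.map_smul, Measure.map_smul, ← hmap',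
          ENNReal.ofReal_prod_of_nonneg fun j _ => (M.p_pos _ _).le]

theorem sum_wordWeight_eq_one (M : PlanarModel I) (ω : ℕ → I) (n : ℕ) :
    ∑ u : ∀ j : Fin n, Fin (M.k (ω j)), ENNReal.ofReal (∏ j : Fin n, M.p (ω j) (u j)) = 1 := by
  rw [← ENNReal.ofReal_sum_of_nonneg fun u _ => Finset.prod_nonneg fun j _ => (M.p_pos _ _).le,
    ← Fintype.prod_sum]
  simp [M.p_sum]

theorem IsCodingFamily.apply_eq_sum (hη : M.IsCodingFamily η) (ω : ℕ → I) (n : ℕ) {s : Set ℂ}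
    (hs : MeasurableSet s) :
    η ω s = ∑ u : ∀ j : Fin n, Fin (M.k (ω j)), ENNReal.ofReal (∏ j : Fin n, M.p (ω j) (u j)) *
      η (shiftN n ω) ((fun z => M.lamProd ω n * z + M.finCode ω n u) ⁻¹' s) := by
  conv_lhs => rw [hη.eq_sum_map ω n]
  simp only [Measure.finsetSum_apply, Measure.smul_apply, smul_eq_mul]
  exact Finset.sum_congr rfl fun u _ => by rw [Measure.map_apply (by fun_prop) hs]

/-! ### Truncated components -/

theorem IsCodingFamily.measure_gridNhd_le (hη : M.IsCodingFamily η) (hR : M.GoodRadius R)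
    (ω : ℕ → I) (k n : ℕ) {C ρ r : ℝ} (hF : FrostmanOnTubes (η (shiftN k ω)) C ρ) (hr : 0 < r)
    (hrR : r + ‖M.lamProd ω k‖ * R ≤ 1 / 2 ^ n) :
    η ω (gridNhd n r) ≤ 4 * ENNReal.ofReal (C * (r / ‖M.lamProd ω k‖) ^ ρ) := by
  rw [hη.apply_eq_sum ω k (measurableSet_gridNhd n r)]
  calc _ ≤ ∑ u : ∀ j : Fin k, Fin (M.k (ω j)), ENNReal.ofReal (∏ j : Fin k, M.p (ω j) (u j)) *
          (4 * ENNReal.ofReal (C * (r / ‖M.lamProd ω k‖) ^ ρ)) :=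
        Finset.sum_le_sum fun u _ => by
          gcongr
          exact hF.measure_preimage_gridNhd_le (hη.ae_norm_le hR _) (lamProd_ne_zero ω k) _ hr hrR
    _ = _ := by rw [← Finset.sum_mul, sum_wordWeight_eq_one, one_mul]

theorem IsCodingFamily.measure_gridNhd_le_of_isNPrime (hη : M.IsCodingFamily η)
    (hR : M.GoodRadius R) {np : (ℕ → I) → ℕ → ℕ} (hnp : M.IsNPrime R np) {q : ℝ}
    (hq : ∀ i, ‖M.lam i‖ ≤ q) {N : ℕ} (hqN : 3 * q ^ N ≤ 1) (ω : ℕ → I) (k : ℕ) {C ρ : ℝ}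
    (hC : 0 ≤ C) (hρ : 0 ≤ ρ) (hF : FrostmanOnTubes (η (shiftN (np ω k) ω)) C ρ) :
    η ω (gridNhd k (3 * R * ‖M.lamProd ω (np ω k + N)‖)) ≤
      4 * ENNReal.ofReal (C * (3 * R * q ^ N) ^ ρ) := by
  have hP : 0 < ‖M.lamProd ω (np ω k)‖ := norm_pos_iff.mpr (lamProd_ne_zero ω _)
  have hPR := hnp.norm_lamProd_mul_le ω k
  have hr : 3 * R * ‖M.lamProd ω (np ω k + N)‖ ≤ 3 * R * (‖M.lamProd ω (np ω k)‖ * q ^ N) := by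
    gcongr
    · linarith [hR.1]
    · exact norm_lamProd_add_le hq ω _ N
  have hr₀ : 0 < 3 * R * ‖M.lamProd ω (np ω k + N)‖ :=
    mul_pos (by linarith [hR.1]) (norm_pos_iff.mpr (lamProd_ne_zero ω _))
  refine (hη.measure_gridNhd_le hR ω _ k hF hr₀ ?_).trans ?_
  · nlinarith [mul_le_mul_of_nonneg_left hqN (mul_pos hP hR.1).le]
  · gcongr
    rw [div_le_iff₀ hP]
    linarith

theorem truncSum_apply (M : PlanarModel I) (η : (ℕ → I) → Measure ℂ) (R : ℝ) (ω : ℕ → I)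
    (n k : ℕ) (x : ℂ) {s : Set ℂ} (hs : MeasurableSet s) :
    truncSum M η R ω n k x s = ∑ u : ∀ j : Fin n, Fin (M.k (ω j)),
      if ∀ z : ℂ, ‖z‖ ≤ R → M.lamProd ω n * z + M.finCode ω n u ∈ dyadicCellOf k x then
        ENNReal.ofReal (∏ j : Fin n, M.p (ω j) (u j)) *
          η (shiftN n ω) ((fun z => M.lamProd ω n * z + M.finCode ω n u) ⁻¹' s)
      else 0 := by
  rw [truncSum, Measure.finsetSum_apply]
  refine Finset.sum_congr rfl fun u _ => ?_
  split_ifs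
  · rw [Measure.smul_apply, smul_eq_mul, Measure.map_apply (by fun_prop) hs]
  · rfl

theorem IsCodingFamily.truncSum_le_restrict (hη : M.IsCodingFamily η) (hR : M.GoodRadius R)
    (ω : ℕ → I) (n k : ℕ) (x : ℂ) :
    truncSum M η R ω n k x ≤ (η ω).restrict (dyadicCellOf k x) := by
  refine Measure.le_iff.mpr fun s hs => ?_
  rw [truncSum_apply M η R ω n k x hs, Measure.restrict_apply hs,
    hη.apply_eq_sum ω n (hs.inter (measurableSet_dyadicCellOf k x))]
  refine Finset.sum_le_sum fun u _ => ?_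
  split_ifs with hu
  · exact mul_le_mul_right (measure_preimage_le_inter_of_mapsTo (hη.ae_norm_le hR _) hu s) _
  · exact zero_le

theorem IsCodingFamily.measure_dyadicCellOf_le_truncSum_add (hη : M.IsCodingFamily η)
    (hR : M.GoodRadius R) (ω : ℕ → I) (n k : ℕ) (x : ℂ) :
    η ω (dyadicCellOf k x) ≤ truncSum M η R ω n k x Set.univ +
      η ω (dyadicCellOf k x ∩ gridNhd k (3 * R * ‖M.lamProd ω n‖)) := by
  have := hη.isProbabilityMeasure (shiftN n ω)
  rw [truncSum_apply M η R ω n k x .univ, hη.apply_eq_sum ω n (measurableSet_dyadicCellOf k x),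
    hη.apply_eq_sum ω n ((measurableSet_dyadicCellOf k x).inter (measurableSet_gridNhd _ _)),
    ← Finset.sum_add_distrib]
  refine Finset.sum_le_sum fun u _ => ?_
  split_ifs with hu
  · rw [Set.preimage_univ, measure_univ]
    exact le_add_right (mul_le_mul_right prob_le_one _)
  · rw [zero_add]
    exact mul_le_mul_right
      (measure_preimage_cell2_le_inter_gridNhd (hη.ae_norm_le hR _) hR.1 (lamProd_ne_zero ω n) _
        hu) _

theorem IsCodingFamily.dTV_rawComponent_truncComponent_lt (hη : M.IsCodingFamily η)
    (hR : M.GoodRadius R) (ω : ℕ → I) (n k : ℕ) (x : ℂ) {ε : ℝ} (hε : ε ≤ 1)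
    (hG : η ω (dyadicCellOf k x ∩ gridNhd k (3 * R * ‖M.lamProd ω n‖)) <
      ENNReal.ofReal ε * η ω (dyadicCellOf k x)) :
    dTV (rawComponent (η ω) k x) (truncComponent M η R ω n k x) < ε := by
  have := hη.isProbabilityMeasure ω
  have hDBE := hη.measure_dyadicCellOf_le_truncSum_add hR ω n k x
  set D := dyadicCellOf k x
  set B := truncSum M η R ω n k x Set.univ
  have hB : B ≠ 0 := fun h => by
    rw [h, zero_add] at hDBE
    exact (hDBE.trans_lt hG).not_ge (mul_le_of_le_one_left zero_le (ENNReal.ofReal_le_one.mpr hε))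
  have hBD : B ≤ η ω D := by
    simpa using Measure.le_iff'.mp (hη.truncSum_le_restrict hR ω n k x) Set.univ
  have hraw : rawComponent (η ω) k x = ((η ω).restrict D Set.univ)⁻¹ • (η ω).restrict D := by
    rw [Measure.restrict_apply_univ]; rfl
  rw [hraw, truncComponent]
  refine (dTV_inv_smul_le_of_le (hη.truncSum_le_restrict hR ω n k x) hB).trans_lt ?_
  rw [Measure.restrict_apply_univ]
  exact one_sub_toReal_div_lt (measure_ne_top _ _) hBD hDBE hG

end PlanarModel

end SSmodel

/-- Approximation of raw components by truncated components in total
variation, given the Frostman-on-tubes property of η^{(T^{k'(ω)}ω)}. -/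
theorem stmt_17 {I : Type} [Fintype I] [MeasurableSpace I] (M : PlanarModel I)
    (η : (ℕ → I) → Measure ℂ) (hη : M.IsCodingFamily η)
    (R : ℝ) (hR : M.GoodRadius R)
    (np : (ℕ → I) → ℕ → ℕ) (hnp : M.IsNPrime R np) :
    ∀ ε C ρ : ℝ, 0 < ε → 0 < C → 0 < ρ → ∃ N : ℕ, ∀ (ω : ℕ → I) (kk : ℕ),
      FrostmanOnTubes (η (shiftN (np ω kk) ω)) C ρ →
      1 - ε < ((η ω) {x | dTV (rawComponent (η ω) kk x)
          (truncComponent M η R ω (np ω kk + N) kk x) < ε}).toReal := by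
  intro ε C ρ hε hC hρ
  obtain ⟨q, hq0, hq1, hq⟩ := M.exists_norm_lam_le
  set ε₁ := min ε 1
  have hε₁ : 0 < ε₁ := lt_min hε one_pos
  obtain ⟨N, hqN, hβ⟩ := exists_three_mul_pow_le_one_and_lt hq0 hq1 C R hρ (mul_pos hε₁ hε₁)
  refine ⟨N, fun ω kk hF => ?_⟩
  have := hη.isProbabilityMeasure ω
  set G := gridNhd kk (3 * R * ‖M.lamProd ω (np ω kk + N)‖)
  refine one_sub_lt_toReal_of_measure_compl_lt ?_
  calc η ω {x | dTV (rawComponent (η ω) kk x)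
          (truncComponent M η R ω (np ω kk + N) kk x) < ε}ᶜ
      ≤ η ω {x | ENNReal.ofReal ε₁ * η ω (dyadicCellOf kk x) ≤ η ω (dyadicCellOf kk x ∩ G)} :=
        measure_mono fun x hx => not_lt.mp fun h => hx <|
          (hη.dTV_rawComponent_truncComponent_lt hR ω _ kk x (min_le_right _ _) h).trans_le
            (min_le_left _ _)
    _ ≤ η ω G / ENNReal.ofReal ε₁ :=
        measure_setOf_mul_measure_dyadicCellOf_le _ _ (measurableSet_gridNhd _ _)
          (ENNReal.ofReal_pos.mpr hε₁).ne' ENNReal.ofReal_ne_top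
    _ ≤ 4 * ENNReal.ofReal (C * (3 * R * q ^ N) ^ ρ) / ENNReal.ofReal ε₁ := by
        gcongr
        exact hη.measure_gridNhd_le_of_isNPrime hR hnp hq hqN ω kk hC.le hρ.le hF
    _ < ENNReal.ofReal ε := by
        rw [← ENNReal.ofReal_ofNat 4, ← ENNReal.ofReal_mul (by norm_num),
          ← ENNReal.ofReal_div_of_pos hε₁, ENNReal.ofReal_lt_ofReal_iff hε, div_lt_iff₀ hε₁]
        nlinarith [min_le_left ε 1]
end
end
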